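/- arXiv:2208.09855 — 3 statements merged into one kernel-verified Lean document; each statement's English description precedes it below -/
import Mathlib

section
/- Let π^{μ,r} be a stationary point of RMD with mutation rate μ ∈ (0,1] and interior reference profile r. Then for any fully supported strategy profile π = (π₁, π₂) ∈ Δ°(A₁) × Δ°(A₂): Σ_{i=1}^{2} ( v_i^{π_i, π_{−i}^{μ,r}} + μ − μ Σ_{a∈A_i} r_i(a) · π_i^{μ,r}(a)/π_i(a) ) = −μ Σ_{i=1}^{2} Σ_{a∈A_i} r_i(a) ( √(π_i(a)/π_i^{μ,r}(a)) − √(π_i^{μ,r}(a)/π_i(a)) )². -/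
open Finset Real

noncomputable section

/-- `p` is a point of the probability simplex over `A`. -/
def isSimplex {A : Type*} [Fintype A] (p : A → ℝ) : Prop :=
  (∀ a, 0 ≤ p a) ∧ ∑ a, p a = 1

/-- `p` is a point of the relative interior of the probability simplex over `A`. -/
def isInterior {A : Type*} [Fintype A] (p : A → ℝ) : Prop :=
  (∀ a, 0 < p a) ∧ ∑ a, p a = 1

/-- Player 1's expected utility in the zero-sum game with payoff `u`. -/
def v1 {A1 A2 : Type*} [Fintype A1] [Fintype A2] (u : A1 → A2 → ℝ)
    (x : A1 → ℝ) (y : A2 → ℝ) : ℝ :=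
  ∑ a, ∑ b, x a * y b * u a b

/-- Player 1's conditional expected utility of action `a` against `y`. -/
def q1 {A1 A2 : Type*} [Fintype A2] (u : A1 → A2 → ℝ) (y : A2 → ℝ) (a : A1) : ℝ :=
  ∑ b, y b * u a b

/-- Player 2's conditional expected utility of action `b` against `x` (utility `-u`). -/
def q2 {A1 A2 : Type*} [Fintype A1] (u : A1 → A2 → ℝ) (x : A1 → ℝ) (b : A2) : ℝ :=
  ∑ a, x a * (- u a b)

/-- Kullback–Leibler divergence. -/
def KL {A : Type*} [Fintype A] (p q : A → ℝ) : ℝ :=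
  ∑ a, p a * Real.log (p a / q a)

/-- Sum of KL divergences over the two players. -/
def KL2 {A1 A2 : Type*} [Fintype A1] [Fintype A2]
    (σ σ' : (A1 → ℝ) × (A2 → ℝ)) : ℝ :=
  KL σ.1 σ'.1 + KL σ.2 σ'.2

/-- `σ` is a stationary point of the replicator-mutator dynamics with mutation
rate `μ` and reference profile `r`. -/
def isStationary {A1 A2 : Type*} [Fintype A1] [Fintype A2] (u : A1 → A2 → ℝ) (μ : ℝ)
    (r σ : (A1 → ℝ) × (A2 → ℝ)) : Prop :=
  isSimplex σ.1 ∧ isSimplex σ.2 ∧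
  (∀ a, σ.1 a * (q1 u σ.2 a - v1 u σ.1 σ.2) + μ * (r.1 a - σ.1 a) = 0) ∧
  (∀ b, σ.2 b * (q2 u σ.1 b - (- v1 u σ.1 σ.2)) + μ * (r.2 b - σ.2 b) = 0)

/-- One multiplicative-weights step with learning rate `η` and gain vector `g`. -/
def mwuStep {A : Type*} [Fintype A] (η : ℝ) (g p : A → ℝ) : A → ℝ :=
  fun a => p a * Real.exp (η * g a) / ∑ a', p a' * Real.exp (η * g a')

/-- Player 1's mutation gradient. -/
def qmu1 {A1 A2 : Type*} [Fintype A2] (u : A1 → A2 → ℝ) (μ : ℝ) (r1 : A1 → ℝ)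
    (x : A1 → ℝ) (y : A2 → ℝ) (a : A1) : ℝ :=
  q1 u y a + μ / x a * (r1 a - x a)

/-- Player 2's mutation gradient. -/
def qmu2 {A1 A2 : Type*} [Fintype A1] (u : A1 → A2 → ℝ) (μ : ℝ) (r2 : A2 → ℝ)
    (x : A1 → ℝ) (y : A2 → ℝ) (b : A2) : ℝ :=
  q2 u x b + μ / y b * (r2 b - y b)

/-- `σ` is a trajectory of M2WU with full feedback, learning rates `η`. -/
def isM2WU {A1 A2 : Type*} [Fintype A1] [Fintype A2] (u : A1 → A2 → ℝ) (μ : ℝ)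
    (r : (A1 → ℝ) × (A2 → ℝ)) (η : ℕ → ℝ) (σ : ℕ → (A1 → ℝ) × (A2 → ℝ)) : Prop :=
  ∀ t, (σ (t+1)).1 = mwuStep (η t) (qmu1 u μ r.1 (σ t).1 (σ t).2) (σ t).1 ∧
       (σ (t+1)).2 = mwuStep (η t) (qmu2 u μ r.2 (σ t).1 (σ t).2) (σ t).2

/-- Exploitability of a strategy profile. -/
def explt {A1 A2 : Type*} [Fintype A1] [Fintype A2] (u : A1 → A2 → ℝ)
    (σ : (A1 → ℝ) × (A2 → ℝ)) : ℝ :=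
  (⨆ x : {p : A1 → ℝ // isSimplex p}, v1 u x.1 σ.2) +
  (⨆ y : {p : A2 → ℝ // isSimplex p}, - v1 u σ.1 y.1)

/-- Nash equilibrium of the two-player zero-sum game with payoff `u`. -/
def isNash {A1 A2 : Type*} [Fintype A1] [Fintype A2] (u : A1 → A2 → ℝ)
    (σ : (A1 → ℝ) × (A2 → ℝ)) : Prop :=
  isSimplex σ.1 ∧ isSimplex σ.2 ∧
  (∀ y, isSimplex y → v1 u σ.1 σ.2 ≤ v1 u σ.1 y) ∧
  (∀ x, isSimplex x → v1 u x σ.2 ≤ v1 u σ.1 σ.2)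

/-- ℓ¹ norm of a finitely supported vector. -/
def l1norm {A : Type*} [Fintype A] (p : A → ℝ) : ℝ := ∑ a, |p a|

/-- Euclidean distance between two profiles (concatenated coordinates). -/
def dist2 {A1 A2 : Type*} [Fintype A1] [Fintype A2]
    (σ σ' : (A1 → ℝ) × (A2 → ℝ)) : ℝ :=
  Real.sqrt ((∑ a, (σ.1 a - σ'.1 a) ^ 2) + (∑ b, (σ.2 b - σ'.2 b) ^ 2))

/-
Stationarity says that player `i`'s payoff vector at the stationary point is
`q_i(a) = v_i + μ - μ r_i(a) / π_i^{μ,r}(a)`, so pairing it with any `π_i` gives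
`v_i + μ - μ Σ r_i π_i / π_i^{μ,r}`. The game values `±v` cancel in the sum over
the players, and `(√(x/y) - √(y/x))² = x/y + y/x - 2` turns the right-hand side into
the same expression.
-/

theorem sq_sqrt_div_sub_sqrt_div {x y : ℝ} (hx : 0 < x) (hy : 0 < y) :
    (√(x / y) - √(y / x)) ^ 2 = x / y + y / x - 2 := by
  have hprod : √(x / y) * √(y / x) = 1 := by
    rw [← Real.sqrt_mul (by positivity), div_mul_div_comm, mul_comm x y,
      div_self (by positivity), Real.sqrt_one]
  rw [sub_sq, Real.sq_sqrt (by positivity), Real.sq_sqrt (by positivity), mul_assoc, hprod]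
  ring

theorem sum_mul_sq_sqrt_div_sub_sqrt_div {A : Type*} [Fintype A] {r x p : A → ℝ}
    (hr : ∑ a, r a = 1) (hx : ∀ a, 0 < x a) (hp : ∀ a, 0 < p a) :
    ∑ a, r a * (√(x a / p a) - √(p a / x a)) ^ 2 =
      ∑ a, r a * (x a / p a) + ∑ a, r a * (p a / x a) - 2 := by
  simp only [sq_sqrt_div_sub_sqrt_div (hx _) (hp _), mul_sub, mul_add, mul_two,
    sum_sub_distrib, sum_add_distrib, hr]
  ring

theorem sum_mul_eq_of_replicator_mutator_rest_point {A : Type*} [Fintype A]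
    {g p r x : A → ℝ} {c μ : ℝ} (hp : ∀ a, p a ≠ 0)
    (hrest : ∀ a, p a * (g a - c) + μ * (r a - p a) = 0) (hx : ∑ a, x a = 1) :
    ∑ a, x a * g a = c + μ - μ * ∑ a, r a * (x a / p a) := by
  have hg : ∀ a, x a * g a = x a * (c + μ) - μ * (r a * (x a / p a)) := fun a => by
    have hga : g a = c + μ - μ * (r a / p a) := by
      field_simp [hp a]
      linear_combination hrest a
    rw [hga]
    ring
  simp only [hg, sum_sub_distrib, ← sum_mul, ← mul_sum, hx, one_mul]

theorem v1_eq_sum_mul_q1 {A1 A2 : Type*} [Fintype A1] [Fintype A2] (u : A1 → A2 → ℝ)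
    (x : A1 → ℝ) (y : A2 → ℝ) : v1 u x y = ∑ a, x a * q1 u y a := by
  simp only [v1, q1, mul_sum, mul_assoc]

theorem neg_v1_eq_sum_mul_q2 {A1 A2 : Type*} [Fintype A1] [Fintype A2] (u : A1 → A2 → ℝ)
    (x : A1 → ℝ) (y : A2 → ℝ) : -v1 u x y = ∑ b, y b * q2 u x b := by
  rw [v1, sum_comm, ← sum_neg_distrib]
  refine sum_congr rfl fun b _ => ?_
  simp only [q2, mul_sum, ← sum_neg_distrib]
  exact sum_congr rfl fun a _ => by ring

theorem rmd_divergence_general {A1 A2 : Type*} [Fintype A1] [Fintype A2]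
    (u : A1 → A2 → ℝ)
    (μ : ℝ)
    (r : (A1 → ℝ) × (A2 → ℝ)) (hr1 : isInterior r.1) (hr2 : isInterior r.2)
    (σst : (A1 → ℝ) × (A2 → ℝ)) (hst : isStationary u μ r σst)
    (hst1 : isInterior σst.1) (hst2 : isInterior σst.2)
    (σ : (A1 → ℝ) × (A2 → ℝ)) (hσ1 : isInterior σ.1) (hσ2 : isInterior σ.2) :
    ((v1 u σ.1 σst.2 + μ - μ * ∑ a, r.1 a * (σst.1 a / σ.1 a)) +
     ((- v1 u σst.1 σ.2) + μ - μ * ∑ b, r.2 b * (σst.2 b / σ.2 b))) =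
    -μ * ((∑ a, r.1 a *
            (Real.sqrt (σ.1 a / σst.1 a) - Real.sqrt (σst.1 a / σ.1 a)) ^ 2) +
          (∑ b, r.2 b *
            (Real.sqrt (σ.2 b / σst.2 b) - Real.sqrt (σst.2 b / σ.2 b)) ^ 2)) := by
  obtain ⟨-, -, hrest1, hrest2⟩ := hst
  have hpay1 : v1 u σ.1 σst.2 =
      v1 u σst.1 σst.2 + μ - μ * ∑ a, r.1 a * (σ.1 a / σst.1 a) := by
    rw [v1_eq_sum_mul_q1]
    exact sum_mul_eq_of_replicator_mutator_rest_point (fun a => (hst1.1 a).ne') hrest1 hσ1.2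
  have hpay2 : -v1 u σst.1 σ.2 =
      -v1 u σst.1 σst.2 + μ - μ * ∑ b, r.2 b * (σ.2 b / σst.2 b) := by
    rw [neg_v1_eq_sum_mul_q2]
    exact sum_mul_eq_of_replicator_mutator_rest_point (fun b => (hst2.1 b).ne') hrest2 hσ2.2
  rw [hpay1, hpay2, sum_mul_sq_sqrt_div_sub_sqrt_div hr1.2 hσ1.1 hst1.1,
    sum_mul_sq_sqrt_div_sub_sqrt_div hr2.2 hσ2.1 hst2.1]
  ring

/-- **Lemma 2 (quasi-metric form of the drift term).** -/
theorem rmd_divergence {A1 A2 : Type*} [Fintype A1] [Fintype A2]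
    (u : A1 → A2 → ℝ)
    (μ : ℝ) (hμ : 0 < μ ∧ μ ≤ 1)
    (r : (A1 → ℝ) × (A2 → ℝ)) (hr1 : isInterior r.1) (hr2 : isInterior r.2)
    (σst : (A1 → ℝ) × (A2 → ℝ)) (hst : isStationary u μ r σst)
    (hst1 : isInterior σst.1) (hst2 : isInterior σst.2)
    (σ : (A1 → ℝ) × (A2 → ℝ)) (hσ1 : isInterior σ.1) (hσ2 : isInterior σ.2) :
    ((v1 u σ.1 σst.2 + μ - μ * ∑ a, r.1 a * (σst.1 a / σ.1 a)) +
     ((- v1 u σst.1 σ.2) + μ - μ * ∑ b, r.2 b * (σst.2 b / σ.2 b))) =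
    -μ * ((∑ a, r.1 a *
            (Real.sqrt (σ.1 a / σst.1 a) - Real.sqrt (σst.1 a / σ.1 a)) ^ 2) +
          (∑ b, r.2 b *
            (Real.sqrt (σ.2 b / σst.2 b) - Real.sqrt (σst.2 b / σ.2 b)) ^ 2)) :=
  rmd_divergence_general u μ r hr1 hr2 σst hst hst1 hst2 σ hσ1 hσ2
end
end

section
/- Let π^{μ,r} be a stationary point of RMD with mutation rate μ ∈ (0,1] and interior reference profile r. Let π^t ∈ Δ°(A₁) × Δ°(A₂) be a fully supported profile with π_i^t(a) ≥ ρ for all i, a for some ρ > 0, and let π^{t+1} be the M2WU full-feedback update of π^t with learning rate η satisfying 0 < η < 1/(2u_max + (μ/ρ) max_{i,a} r_i(a)). Then KL(π^t, π^{t+1}) ≤ 8η²u_max² Σ_{i=1}^{2} ‖π_i^t − π_i^{μ,r}‖₁² + 8η²μ² Σ_{i=1}^{2} Σ_{a∈A_i} r_i(a)² (1/π_i^{μ,r}(a) − 1/π_i^t(a))². -/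
open Finset Real

noncomputable section

/-! The MWU step is invariant under shifting the gains by a constant `c`; taking `c` to be the
value of the stationary point, the stationarity equation turns the shifted gain of action `a`
into `(q(π^t) - q(π^{μ,r}))(a) + μ r(a) (1/π^t(a) - 1/π^{μ,r}(a))`. Writing the KL divergence
of one MWU step as a log-partition function and using `exp z ≤ 1 + z + z²` for `z ≤ 1` and
`log w ≤ w - 1` bounds it by `η²` times the second moment of the shifted gains, which
`(P + Q)² ≤ 2P² + 2Q²` splits into the two terms of the claim. -/

lemma Real.exp_le_one_add_add_sq {z : ℝ} (hz : z ≤ 1) : exp z ≤ 1 + z + z ^ 2 := by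
  rcases le_or_gt (-1) z with h | h
  · have := (abs_le.1 (Real.abs_exp_sub_one_sub_id_le (abs_le.2 ⟨h, hz⟩))).2
    linarith
  · nlinarith [Real.exp_lt_one_iff.2 (by linarith : z < 0)]

lemma isInterior.le_one {A : Type*} [Fintype A] {p : A → ℝ} (hp : isInterior p) (a : A) :
    p a ≤ 1 :=
  hp.2 ▸ single_le_sum (fun b _ => (hp.1 b).le) (mem_univ a)

lemma isInterior.isSimplex {A : Type*} [Fintype A] {p : A → ℝ} (hp : isInterior p) :
    isSimplex p :=
  ⟨fun a => (hp.1 a).le, hp.2⟩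

section MWU

variable {A : Type*} [Fintype A]

lemma mwuStep_sub_const (η c : ℝ) (g p : A → ℝ) :
    mwuStep η (fun a => g a - c) p = mwuStep η g p := by
  have hshift : ∀ a, p a * exp (η * (g a - c)) = exp (-(η * c)) * (p a * exp (η * g a)) :=
    fun a => by rw [mul_left_comm, ← exp_add]; ring_nf
  ext a
  simp only [mwuStep, hshift, ← mul_sum]
  exact mul_div_mul_left _ _ (exp_ne_zero _)

lemma sum_mul_exp_pos {p : A → ℝ} (hp : isInterior p) (f : A → ℝ) :
    0 < ∑ a, p a * exp (f a) :=
  sum_pos (fun a _ => mul_pos (hp.1 a) (exp_pos _))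
    (nonempty_of_sum_ne_zero (hp.2 ▸ one_ne_zero))

lemma kl_mwuStep_eq {p : A → ℝ} (hp : isInterior p) (η : ℝ) (g : A → ℝ) :
    KL p (mwuStep η g p) = log (∑ a, p a * exp (η * g a)) - η * ∑ a, p a * g a := by
  simp only [KL, mwuStep]
  set Z := ∑ a, p a * exp (η * g a)
  have hZ : 0 < Z := sum_mul_exp_pos hp _
  have hterm : ∀ a,
      p a * log (p a / (p a * exp (η * g a) / Z)) = p a * log Z - η * (p a * g a) := fun a => by
    rw [div_div_eq_mul_div, mul_div_mul_left _ _ (hp.1 a).ne', log_div hZ.ne' (exp_ne_zero _),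
      log_exp]
    ring
  rw [sum_congr rfl fun a _ => hterm a, sum_sub_distrib, ← sum_mul, hp.2, one_mul, ← mul_sum]

lemma kl_mwuStep_le {p : A → ℝ} (hp : isInterior p) {η : ℝ} {g : A → ℝ}
    (hg : ∀ a, η * g a ≤ 1) :
    KL p (mwuStep η g p) ≤ η ^ 2 * ∑ a, p a * g a ^ 2 := by
  have hZ :
      ∑ a, p a * exp (η * g a) ≤ 1 + η * ∑ a, p a * g a + η ^ 2 * ∑ a, p a * g a ^ 2 :=
    calc ∑ a, p a * exp (η * g a) ≤ ∑ a, p a * (1 + η * g a + (η * g a) ^ 2) :=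
          sum_le_sum fun a _ =>
            mul_le_mul_of_nonneg_left (Real.exp_le_one_add_add_sq (hg a)) (hp.1 a).le
      _ = ∑ a, (p a + η * (p a * g a) + η ^ 2 * (p a * g a ^ 2)) :=
          sum_congr rfl fun a _ => by ring
      _ = _ := by rw [sum_add_distrib, sum_add_distrib, hp.2, mul_sum, mul_sum]
  rw [kl_mwuStep_eq hp]
  linarith [log_le_sub_one_of_pos (sum_mul_exp_pos hp (fun a => η * g a))]

lemma kl_mwuStep_le_of_sub_const {p : A → ℝ} (hp : isInterior p) {η c : ℝ} {g : A → ℝ}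
    (hg : ∀ a, η * (g a - c) ≤ 1) :
    KL p (mwuStep η g p) ≤ η ^ 2 * ∑ a, p a * (g a - c) ^ 2 := by
  rw [← mwuStep_sub_const η c]
  exact kl_mwuStep_le hp hg

lemma sum_mul_add_sq_le {p P Q : A → ℝ} (hp : isInterior p) {B : ℝ}
    (hP : ∀ a, |P a| ≤ B) :
    ∑ a, p a * (P a + Q a) ^ 2 ≤ 2 * B ^ 2 + 2 * ∑ a, Q a ^ 2 := by
  have hterm : ∀ a, p a * (P a + Q a) ^ 2 ≤ 2 * B ^ 2 * p a + 2 * Q a ^ 2 := fun a => by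
    have hP2 : P a ^ 2 ≤ B ^ 2 := sq_le_sq' (abs_le.1 (hP a)).1 (abs_le.1 (hP a)).2
    nlinarith [add_sq_le (a := P a) (b := Q a), hp.1 a, hp.le_one a, sq_nonneg (Q a)]
  calc ∑ a, p a * (P a + Q a) ^ 2 ≤ ∑ a, (2 * B ^ 2 * p a + 2 * Q a ^ 2) :=
        sum_le_sum fun a _ => hterm a
    _ = _ := by rw [sum_add_distrib, ← mul_sum, ← mul_sum, hp.2, mul_one]

end MWU

section OnePlayer

variable {A B : Type*} [Fintype B] {w : A → B → ℝ} {umax : ℝ}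

lemma abs_q1_le (hw : ∀ a b, |w a b| ≤ umax) {p : B → ℝ} (hp : isSimplex p) (a : A) :
    |q1 w p a| ≤ umax :=
  calc |q1 w p a| ≤ ∑ b, |p b * w a b| := abs_sum_le_sum_abs _ _
    _ ≤ ∑ b, p b * umax := sum_le_sum fun b _ => by
        rw [abs_mul, abs_of_nonneg (hp.1 b)]
        exact mul_le_mul_of_nonneg_left (hw a b) (hp.1 b)
    _ = umax := by rw [← sum_mul, hp.2, one_mul]

lemma abs_q1_sub_q1_le (hw : ∀ a b, |w a b| ≤ umax) (y y' : B → ℝ) (a : A) :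
    |q1 w y a - q1 w y' a| ≤ umax * l1norm (fun b => y b - y' b) :=
  calc |q1 w y a - q1 w y' a| = |∑ b, (y b - y' b) * w a b| := by
        simp only [q1, ← sum_sub_distrib, sub_mul]
    _ ≤ ∑ b, |(y b - y' b) * w a b| := abs_sum_le_sum_abs _ _
    _ ≤ ∑ b, |y b - y' b| * umax := sum_le_sum fun b _ => by
        rw [abs_mul]
        exact mul_le_mul_of_nonneg_left (hw a b) (abs_nonneg _)
    _ = umax * l1norm (fun b => y b - y' b) := by rw [← sum_mul, mul_comm, l1norm]

lemma qmu1_sub_eq_of_stationary {μ c : ℝ} {r1 σ1 x : A → ℝ} {σ2 y : B → ℝ} {a : A}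
    (hσ1 : 0 < σ1 a) (hx : 0 < x a)
    (hst : σ1 a * (q1 w σ2 a - c) + μ * (r1 a - σ1 a) = 0) :
    qmu1 w μ r1 x y a - c = (q1 w y a - q1 w σ2 a) + μ * r1 a * (1 / x a - 1 / σ1 a) := by
  have hc : c = q1 w σ2 a + μ * r1 a / σ1 a - μ := by
    field_simp
    linarith
  rw [hc, qmu1]
  field_simp
  ring

lemma kl_mwuStep_qmu1_le [Fintype A] (hw : ∀ a b, |w a b| ≤ umax) {μ ρ η : ℝ} (hμ : 0 ≤ μ)
    (hρ : 0 < ρ) (hη : 0 ≤ η) {r1 : A → ℝ} (hr : ∀ a, 0 ≤ r1 a) {σ1 : A → ℝ} {σ2 : B → ℝ}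
    (hσ1 : ∀ a, 0 < σ1 a) (hσ2 : isSimplex σ2) {c : ℝ}
    (hst : ∀ a, σ1 a * (q1 w σ2 a - c) + μ * (r1 a - σ1 a) = 0)
    {x : A → ℝ} {y : B → ℝ} (hx : isInterior x) (hy : isSimplex y) (hρx : ∀ a, ρ ≤ x a)
    {M : ℝ} (hM : ∀ a, r1 a ≤ M) (hηM : η * (2 * umax + μ / ρ * M) ≤ 1) :
    KL x (mwuStep η (qmu1 w μ r1 x y) x) ≤
      2 * η ^ 2 * umax ^ 2 * l1norm (fun b => y b - σ2 b) ^ 2 +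
      2 * η ^ 2 * μ ^ 2 * ∑ a, r1 a ^ 2 * (1 / σ1 a - 1 / x a) ^ 2 := by
  have hsplit a := qmu1_sub_eq_of_stationary (y := y) (hσ1 a) (hx.1 a) (hst a)
  have hmut a : μ * r1 a * (1 / x a - 1 / σ1 a) ≤ μ / ρ * M :=
    calc μ * r1 a * (1 / x a - 1 / σ1 a) ≤ μ * r1 a * (1 / ρ) := by
          gcongr
          · exact mul_nonneg hμ (hr a)
          · linarith [one_div_pos.2 (hσ1 a), one_div_le_one_div_of_le hρ (hρx a)]
      _ ≤ μ * M * (1 / ρ) := by gcongr; exact hM a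
      _ = μ / ρ * M := by ring
  have hstep a : η * (qmu1 w μ r1 x y a - c) ≤ 1 := by
    refine le_trans (mul_le_mul_of_nonneg_left ?_ hη) hηM
    rw [hsplit a]
    linarith [(abs_le.1 (abs_q1_le hw hy a)).2, (abs_le.1 (abs_q1_le hw hσ2 a)).1, hmut a]
  calc KL x (mwuStep η (qmu1 w μ r1 x y) x)
      ≤ η ^ 2 * ∑ a, x a * (qmu1 w μ r1 x y a - c) ^ 2 := kl_mwuStep_le_of_sub_const hx hstep
    _ ≤ η ^ 2 * (2 * (umax * l1norm (fun b => y b - σ2 b)) ^ 2 +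
          2 * ∑ a, (μ * r1 a * (1 / x a - 1 / σ1 a)) ^ 2) := by
        simp only [hsplit]
        gcongr
        exact sum_mul_add_sq_le hx (abs_q1_sub_q1_le hw y σ2)
    _ = _ := by
        simp only [mul_add, mul_sum]
        congr 1
        · ring
        · exact sum_congr rfl fun a _ => by ring

end OnePlayer

lemma mul_le_one_of_lt_one_div {η D : ℝ} (hη : 0 < η) (h : η < 1 / D) : η * D ≤ 1 := by
  have hD : 0 < D := one_div_pos.1 (hη.trans h)
  exact ((lt_div_iff₀ hD).1 h).le

theorem kl_path_upper_bound_general {A1 A2 : Type*} [Fintype A1] [Fintype A2]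
    (u : A1 → A2 → ℝ) (umax : ℝ) (hu : ∀ a b, |u a b| ≤ umax)
    (μ : ℝ) (hμ : 0 < μ ∧ μ ≤ 1)
    (r : (A1 → ℝ) × (A2 → ℝ)) (hr1 : isInterior r.1) (hr2 : isInterior r.2)
    (σst : (A1 → ℝ) × (A2 → ℝ)) (hst : isStationary u μ r σst)
    (hst1 : isInterior σst.1) (hst2 : isInterior σst.2)
    (x : A1 → ℝ) (y : A2 → ℝ) (hx : isInterior x) (hy : isInterior y)
    (ρ : ℝ) (hρ : 0 < ρ) (hρx : ∀ a, ρ ≤ x a) (hρy : ∀ b, ρ ≤ y b)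
    (η : ℝ)
    (hη : 0 < η ∧
      η < 1 / (2 * umax + (μ / ρ) * max (⨆ a, r.1 a) (⨆ b, r.2 b)))
    (x' : A1 → ℝ) (y' : A2 → ℝ)
    (hx' : x' = mwuStep η (qmu1 u μ r.1 x y) x)
    (hy' : y' = mwuStep η (qmu2 u μ r.2 x y) y) :
    KL x x' + KL y y' ≤
      8 * η ^ 2 * umax ^ 2 *
        ((l1norm (fun a => x a - σst.1 a)) ^ 2 +
         (l1norm (fun b => y b - σst.2 b)) ^ 2) +
      8 * η ^ 2 * μ ^ 2 *
        ((∑ a, r.1 a ^ 2 * (1 / σst.1 a - 1 / x a) ^ 2) +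
         (∑ b, r.2 b ^ 2 * (1 / σst.2 b - 1 / y b) ^ 2)) := by
  obtain ⟨hη, hηM⟩ := hη
  have hM1 a : r.1 a ≤ max (⨆ a, r.1 a) (⨆ b, r.2 b) :=
    (le_ciSup (Finite.bddAbove_range _) a).trans (le_max_left _ _)
  have hM2 b : r.2 b ≤ max (⨆ a, r.1 a) (⨆ b, r.2 b) :=
    (le_ciSup (Finite.bddAbove_range _) b).trans (le_max_right _ _)
  replace hηM := mul_le_one_of_lt_one_div hη hηM
  have hK1 := kl_mwuStep_qmu1_le hu hμ.1.le hρ hη.le (fun a => (hr1.1 a).le) hst1.1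
    hst2.isSimplex hst.2.2.1 hx hy.isSimplex hρx hM1 hηM
  -- Player 2 is player 1 of the game with payoff `(b, a) ↦ -u a b`.
  have hK2 : KL y (mwuStep η (qmu2 u μ r.2 x y) y) ≤
      2 * η ^ 2 * umax ^ 2 * l1norm (fun a => x a - σst.1 a) ^ 2 +
      2 * η ^ 2 * μ ^ 2 * ∑ b, r.2 b ^ 2 * (1 / σst.2 b - 1 / y b) ^ 2 :=
    kl_mwuStep_qmu1_le (w := fun b a => -u a b) (fun b a => (abs_neg (u a b)).trans_le (hu a b))
      hμ.1.le hρ hη.le (fun b => (hr2.1 b).le) hst2.1 hst1.isSimplex hst.2.2.2 hy hx.isSimplex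
      hρy hM2 hηM
  have hS1 : 0 ≤ ∑ a, r.1 a ^ 2 * (1 / σst.1 a - 1 / x a) ^ 2 := by positivity
  have hS2 : 0 ≤ ∑ b, r.2 b ^ 2 * (1 / σst.2 b - 1 / y b) ^ 2 := by positivity
  have hημ : 0 ≤ η ^ 2 * μ ^ 2 := by positivity
  subst hx' hy'
  linarith [mul_nonneg hημ hS1, mul_nonneg hημ hS2,
    mul_nonneg (sq_nonneg (η * umax)) (sq_nonneg (l1norm (fun a => x a - σst.1 a))),
    mul_nonneg (sq_nonneg (η * umax)) (sq_nonneg (l1norm (fun b => y b - σst.2 b)))]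

/-- **Lemma 3 (quasi-metric upper bound on the one-step KL divergence).** -/
theorem kl_path_upper_bound {A1 A2 : Type*} [Fintype A1] [Fintype A2]
    [Nonempty A1] [Nonempty A2]
    (u : A1 → A2 → ℝ) (umax : ℝ) (hu : ∀ a b, |u a b| ≤ umax)
    (μ : ℝ) (hμ : 0 < μ ∧ μ ≤ 1)
    (r : (A1 → ℝ) × (A2 → ℝ)) (hr1 : isInterior r.1) (hr2 : isInterior r.2)
    (σst : (A1 → ℝ) × (A2 → ℝ)) (hst : isStationary u μ r σst)
    (hst1 : isInterior σst.1) (hst2 : isInterior σst.2)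
    (x : A1 → ℝ) (y : A2 → ℝ) (hx : isInterior x) (hy : isInterior y)
    (ρ : ℝ) (hρ : 0 < ρ) (hρx : ∀ a, ρ ≤ x a) (hρy : ∀ b, ρ ≤ y b)
    (η : ℝ)
    (hη : 0 < η ∧
      η < 1 / (2 * umax + (μ / ρ) * max (⨆ a, r.1 a) (⨆ b, r.2 b)))
    (x' : A1 → ℝ) (y' : A2 → ℝ)
    (hx' : x' = mwuStep η (qmu1 u μ r.1 x y) x)
    (hy' : y' = mwuStep η (qmu2 u μ r.2 x y) y) :
    KL x x' + KL y y' ≤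
      8 * η ^ 2 * umax ^ 2 *
        ((l1norm (fun a => x a - σst.1 a)) ^ 2 +
         (l1norm (fun b => y b - σst.2 b)) ^ 2) +
      8 * η ^ 2 * μ ^ 2 *
        ((∑ a, r.1 a ^ 2 * (1 / σst.1 a - 1 / x a) ^ 2) +
         (∑ b, r.2 b ^ 2 * (1 / σst.2 b - 1 / y b) ^ 2)) :=
  kl_path_upper_bound_general u umax hu μ hμ r hr1 hr2 σst hst hst1 hst2 x y hx hy ρ hρ hρx hρy η hη
    x' y' hx' hy'
end
end

section
/- Fix a mutation rate μ ∈ (0,1]. Let r⁰ ∈ Δ°(A₁) × Δ°(A₂) and let (r^k)_{k≥0} be a sequence of interior profiles such that for every k ≥ 0, r^{k+1} is a stationary point of RMD with reference profile r^k. Then the sequence converges to the set of Nash equilibria Π* of the game: min_{π*∈Π*} KL(π*, r^k) → 0 as k → ∞. -/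
open Finset Real

noncomputable section

namespace M2WU

variable {A A1 A2 : Type*} [Fintype A] [Fintype A1] [Fintype A2]

/-- auxiliary convex function `x - 1 - log x`. -/
def klf (x : ℝ) : ℝ := x - 1 - Real.log x

lemma klf_nonneg {x : ℝ} (hx : 0 < x) : 0 ≤ klf x := by
  have := Real.log_le_sub_one_of_pos hx
  simp only [klf]; linarith

lemma v1_sum_q1 (u : A1 → A2 → ℝ) (x : A1 → ℝ) (y : A2 → ℝ) :
    v1 u x y = ∑ a, x a * q1 u y a := by
  unfold v1 q1
  refine Finset.sum_congr rfl fun a _ => ?_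
  rw [Finset.mul_sum]
  refine Finset.sum_congr rfl fun b _ => by ring

lemma v1_sum_q2 (u : A1 → A2 → ℝ) (x : A1 → ℝ) (y : A2 → ℝ) :
    v1 u x y = - ∑ b, y b * q2 u x b := by
  unfold v1 q2
  rw [Finset.sum_comm (γ := A1)]
  rw [← Finset.sum_neg_distrib]
  refine Finset.sum_congr rfl fun b _ => ?_
  rw [Finset.mul_sum, ← Finset.sum_neg_distrib]
  refine Finset.sum_congr rfl fun a _ => by ring

lemma isSimplex_le_one {p : A → ℝ} (hp : isSimplex p) (a : A) : p a ≤ 1 := by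
  rw [← hp.2]
  exact Finset.single_le_sum (fun i _ => hp.1 i) (Finset.mem_univ a)

lemma kl_term_ge {p q : ℝ} (hp : 0 ≤ p) (hq : 0 < q) :
    p - q ≤ p * Real.log (p / q) := by
  rcases eq_or_lt_of_le hp with h | h
  · simp [← h]; linarith
  · have h1 : Real.log (q / p) ≤ q / p - 1 := Real.log_le_sub_one_of_pos (by positivity)
    have h2 : Real.log (p / q) = - Real.log (q / p) := by
      rw [← Real.log_inv]; congr 1; field_simp
    rw [h2]
    have := mul_le_mul_of_nonneg_left h1 hp
    calc p - q = p * (1 - q/p) := by field_simp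
    _ ≤ p * (- Real.log (q/p)) := by nlinarith
    _ = p * -Real.log (q / p) := rfl

lemma termf_nonneg {p q : ℝ} (hp : 0 ≤ p) (hq : 0 < q) :
    0 ≤ p * Real.log (p / q) - p + q := by have := kl_term_ge hp hq; linarith

lemma KL_eq_termf {p q : A → ℝ} (hp : ∑ a, p a = 1) (hq : ∑ a, q a = 1) :
    KL p q = ∑ a, (p a * Real.log (p a / q a) - p a + q a) := by
  unfold KL
  rw [Finset.sum_add_distrib, Finset.sum_sub_distrib, hp, hq]
  ring

lemma KL_nonneg {p q : A → ℝ} (hp : isSimplex p) (hq0 : ∀ a, 0 < q a)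
    (hq1 : ∑ a, q a = 1) : 0 ≤ KL p q := by
  rw [KL_eq_termf hp.2 hq1]
  exact Finset.sum_nonneg fun a _ => termf_nonneg (hp.1 a) (hq0 a)

lemma termf_eq_klf {p q : ℝ} (hp : 0 < p) (hq : 0 < q) :
    p * Real.log (p / q) - p + q = p * klf (q / p) := by
  unfold klf
  rw [Real.log_div (ne_of_gt hq) (ne_of_gt hp), Real.log_div (ne_of_gt hp) (ne_of_gt hq)]
  field_simp
  ring

lemma kl_term_diff {p q q' : ℝ} (hp : 0 ≤ p) (hq : 0 < q) (hq' : 0 < q') :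
    p * Real.log (p / q) - p * Real.log (p / q') = p * Real.log (q' / q) := by
  rcases eq_or_lt_of_le hp with h | h
  · simp [← h]
  · rw [Real.log_div (ne_of_gt h) (ne_of_gt hq), Real.log_div (ne_of_gt h) (ne_of_gt hq'),
      Real.log_div (ne_of_gt hq') (ne_of_gt hq)]
    ring

lemma log_ratio_eq_klf {s t : ℝ} (hs : 0 < s) (ht : 0 < t) :
    Real.log (t / s) = klf (s / t) + 1 - s / t := by
  unfold klf
  rw [Real.log_div (ne_of_gt ht) (ne_of_gt hs), Real.log_div (ne_of_gt hs) (ne_of_gt ht)]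
  ring

end M2WU

namespace M2WU

variable {A1 A2 : Type*} [Fintype A1] [Fintype A2] {u : A1 → A2 → ℝ} {μ : ℝ}
  {rr σ : (A1 → ℝ) × (A2 → ℝ)}

lemma stat_ratio1 (hst : isStationary u μ rr σ) (a : A1) :
    μ * rr.1 a = σ.1 a * (μ - (q1 u σ.2 a - v1 u σ.1 σ.2)) := by
  linear_combination hst.2.2.1 a

lemma stat_ratio2 (hst : isStationary u μ rr σ) (b : A2) :
    μ * rr.2 b = σ.2 b * (μ - (q2 u σ.1 b + v1 u σ.1 σ.2)) := by
  linear_combination hst.2.2.2 b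

lemma denom_pos1 (hst : isStationary u μ rr σ) (hμ : 0 < μ)
    (hr : 0 < rr.1 a) (hs : 0 < σ.1 a) :
    0 < μ - (q1 u σ.2 a - v1 u σ.1 σ.2) := by
  have h := stat_ratio1 hst a
  nlinarith

lemma denom_pos2 (hst : isStationary u μ rr σ) (hμ : 0 < μ)
    (hr : 0 < rr.2 b) (hs : 0 < σ.2 b) :
    0 < μ - (q2 u σ.1 b + v1 u σ.1 σ.2) := by
  have h := stat_ratio2 hst b
  nlinarith

lemma adv_div1 (hst : isStationary u μ rr σ) (hμ : 0 < μ) (hs : 0 < σ.1 a) :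
    q1 u σ.2 a - v1 u σ.1 σ.2 = μ * (1 - rr.1 a / σ.1 a) := by
  have h := stat_ratio1 hst a
  field_simp
  nlinarith

lemma adv_div2 (hst : isStationary u μ rr σ) (hμ : 0 < μ) (hs : 0 < σ.2 b) :
    q2 u σ.1 b + v1 u σ.1 σ.2 = μ * (1 - rr.2 b / σ.2 b) := by
  have h := stat_ratio2 hst b
  field_simp
  nlinarith

lemma sum_adv1 {η1 : A1 → ℝ} (hη : ∑ a, η1 a = 1) (x : A1 → ℝ) (y : A2 → ℝ) :
    ∑ a, η1 a * (q1 u y a - v1 u x y) = v1 u η1 y - v1 u x y := by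
  have : ∑ a, η1 a * (q1 u y a - v1 u x y)
      = (∑ a, η1 a * q1 u y a) - (∑ a, η1 a) * v1 u x y := by
    rw [Finset.sum_mul]
    rw [← Finset.sum_sub_distrib]
    exact Finset.sum_congr rfl fun a _ => by ring
  rw [this, hη, v1_sum_q1 u x y, v1_sum_q1 u η1 y]
  ring

lemma sum_adv2 {η2 : A2 → ℝ} (hη : ∑ b, η2 b = 1) (x : A1 → ℝ) (y : A2 → ℝ) :
    ∑ b, η2 b * (q2 u x b + v1 u x y) = v1 u x y - v1 u x η2 := by
  have : ∑ b, η2 b * (q2 u x b + v1 u x y)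
      = (∑ b, η2 b * q2 u x b) + (∑ b, η2 b) * v1 u x y := by
    rw [Finset.sum_mul, ← Finset.sum_add_distrib]
    exact Finset.sum_congr rfl fun b _ => by ring
  rw [this, hη, v1_sum_q2 u x η2, v1_sum_q2 u x y]
  ring

/-- The fundamental one-step Lyapunov identity. -/
lemma drop_eq (hst : isStationary u μ rr σ) (hμ : 0 < μ)
    (hr1 : isInterior rr.1) (hr2 : isInterior rr.2)
    (hs1 : isInterior σ.1) (hs2 : isInterior σ.2)
    {η : (A1 → ℝ) × (A2 → ℝ)} (hη1 : isSimplex η.1) (hη2 : isSimplex η.2) :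
    KL2 η rr - KL2 η σ
      = (∑ a, η.1 a * klf (rr.1 a / σ.1 a)) + (∑ b, η.2 b * klf (rr.2 b / σ.2 b))
        + (v1 u η.1 σ.2 - v1 u σ.1 η.2) / μ := by
  have key1 : ∀ a, η.1 a * Real.log (η.1 a / rr.1 a) - η.1 a * Real.log (η.1 a / σ.1 a)
      = η.1 a * klf (rr.1 a / σ.1 a) + η.1 a * (q1 u σ.2 a - v1 u σ.1 σ.2) / μ := by
    intro a
    rw [kl_term_diff (hη1.1 a) (hr1.1 a) (hs1.1 a),
      log_ratio_eq_klf (hr1.1 a) (hs1.1 a), adv_div1 hst hμ (hs1.1 a)]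
    field_simp
    ring
  have key2 : ∀ b, η.2 b * Real.log (η.2 b / rr.2 b) - η.2 b * Real.log (η.2 b / σ.2 b)
      = η.2 b * klf (rr.2 b / σ.2 b) + η.2 b * (q2 u σ.1 b + v1 u σ.1 σ.2) / μ := by
    intro b
    rw [kl_term_diff (hη2.1 b) (hr2.1 b) (hs2.1 b),
      log_ratio_eq_klf (hr2.1 b) (hs2.1 b), adv_div2 hst hμ (hs2.1 b)]
    field_simp
    ring
  have e1 : KL η.1 rr.1 - KL η.1 σ.1
      = (∑ a, η.1 a * klf (rr.1 a / σ.1 a))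
        + (∑ a, η.1 a * (q1 u σ.2 a - v1 u σ.1 σ.2)) / μ := by
    unfold KL
    rw [← Finset.sum_sub_distrib]
    rw [Finset.sum_congr rfl fun a _ => key1 a, Finset.sum_add_distrib,
      ← Finset.sum_div]
  have e2 : KL η.2 rr.2 - KL η.2 σ.2
      = (∑ b, η.2 b * klf (rr.2 b / σ.2 b))
        + (∑ b, η.2 b * (q2 u σ.1 b + v1 u σ.1 σ.2)) / μ := by
    unfold KL
    rw [← Finset.sum_sub_distrib]
    rw [Finset.sum_congr rfl fun b _ => key2 b, Finset.sum_add_distrib,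
      ← Finset.sum_div]
  have : KL2 η rr - KL2 η σ = (KL η.1 rr.1 - KL η.1 σ.1) + (KL η.2 rr.2 - KL η.2 σ.2) := by
    unfold KL2; ring
  rw [this, e1, e2, sum_adv1 hη1.2, sum_adv2 hη2.2]
  ring

/-- One-step Lyapunov decrease bound, keeping one `klf` term per player. -/
lemma drop_ge (hst : isStationary u μ rr σ) (hμ : 0 < μ)
    (hr1 : isInterior rr.1) (hr2 : isInterior rr.2)
    (hs1 : isInterior σ.1) (hs2 : isInterior σ.2)
    {η : (A1 → ℝ) × (A2 → ℝ)} (hη1 : isSimplex η.1) (hη2 : isSimplex η.2)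
    (a₀ : A1) (b₀ : A2) :
    η.1 a₀ * klf (rr.1 a₀ / σ.1 a₀) + η.2 b₀ * klf (rr.2 b₀ / σ.2 b₀)
        + (v1 u η.1 σ.2 - v1 u σ.1 η.2) / μ
      ≤ KL2 η rr - KL2 η σ := by
  rw [drop_eq hst hμ hr1 hr2 hs1 hs2 hη1 hη2]
  have h1 : η.1 a₀ * klf (rr.1 a₀ / σ.1 a₀) ≤ ∑ a, η.1 a * klf (rr.1 a / σ.1 a) :=
    Finset.single_le_sum
      (fun a _ => mul_nonneg (hη1.1 a) (klf_nonneg (div_pos (hr1.1 a) (hs1.1 a))))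
      (Finset.mem_univ a₀)
  have h2 : η.2 b₀ * klf (rr.2 b₀ / σ.2 b₀) ≤ ∑ b, η.2 b * klf (rr.2 b / σ.2 b) :=
    Finset.single_le_sum
      (fun b _ => mul_nonneg (hη2.1 b) (klf_nonneg (div_pos (hr2.1 b) (hs2.1 b))))
      (Finset.mem_univ b₀)
  linarith

/-- Slack decomposition of the Lyapunov gain term. -/
lemma G_decomp {η : (A1 → ℝ) × (A2 → ℝ)} {x : A1 → ℝ} {y : A2 → ℝ}
    (hx : ∑ a, x a = 1) (hy : ∑ b, y b = 1) (vstar : ℝ) :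
    v1 u η.1 y - v1 u x η.2
      = (∑ b, y b * ((∑ a, η.1 a * u a b) - vstar))
        + (∑ a, x a * (vstar - q1 u η.2 a)) := by
  have e1 : v1 u η.1 y = ∑ b, y b * (∑ a, η.1 a * u a b) := by
    unfold v1
    rw [Finset.sum_comm]
    refine Finset.sum_congr rfl fun b _ => ?_
    rw [Finset.mul_sum]
    exact Finset.sum_congr rfl fun a _ => by ring
  have e2 : v1 u x η.2 = ∑ a, x a * q1 u η.2 a := v1_sum_q1 u x η.2
  rw [e1, e2]
  rw [Finset.sum_congr rfl fun b (_ : b ∈ Finset.univ) =>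
    (mul_sub (y b) (∑ a, η.1 a * u a b) vstar : _),
    Finset.sum_sub_distrib]
  rw [Finset.sum_congr rfl fun a (_ : a ∈ Finset.univ) =>
    (mul_sub (x a) vstar (q1 u η.2 a) : _),
    Finset.sum_sub_distrib]
  rw [← Finset.sum_mul, ← Finset.sum_mul, hx, hy]
  ring

end M2WU

namespace M2WU
section Cone
variable {ι κ : Type*} [Fintype ι] [Fintype κ]

/-- Finitely generated convex cone. -/
def fgCone (v : κ → (ι → ℝ)) : Set (ι → ℝ) :=
  {x | ∃ lam : κ → ℝ, (∀ j, 0 ≤ lam j) ∧ x = ∑ j, lam j • v j}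

lemma gen_mem_fgCone (v : κ → (ι → ℝ)) (j0 : κ) : v j0 ∈ fgCone v := by
  classical
  refine ⟨fun j => if j = j0 then 1 else 0, fun j => by simp only []; split <;> norm_num, ?_⟩
  rw [Finset.sum_eq_single j0]
  · simp
  · intro j _ hj; simp [hj]
  · intro h; exact absurd (Finset.mem_univ j0) h

lemma zero_mem_fgCone (v : κ → (ι → ℝ)) : (0 : ι → ℝ) ∈ fgCone v :=
  ⟨0, fun j => le_rfl, by simp⟩

lemma smul_mem_fgCone (v : κ → (ι → ℝ)) {x : ι → ℝ} {t : ℝ} (ht : 0 ≤ t)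
    (hx : x ∈ fgCone v) : t • x ∈ fgCone v := by
  obtain ⟨lam, h0, he⟩ := hx
  refine ⟨fun j => t * lam j, fun j => mul_nonneg ht (h0 j), ?_⟩
  rw [he, Finset.smul_sum]
  exact Finset.sum_congr rfl fun j _ => by rw [smul_smul]

lemma convex_fgCone (v : κ → (ι → ℝ)) : Convex ℝ (fgCone v) := by
  rintro x ⟨l1, h1, e1⟩ y ⟨l2, h2, e2⟩ a b ha hb _
  refine ⟨fun j => a * l1 j + b * l2 j, fun j => add_nonneg (mul_nonneg ha (h1 j)) (mul_nonneg hb (h2 j)), ?_⟩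
  rw [e1, e2, Finset.smul_sum, Finset.smul_sum, ← Finset.sum_add_distrib]
  exact Finset.sum_congr rfl fun j _ => by
    rw [add_smul, smul_smul, smul_smul]

lemma fgCone_caratheodory_aux (v : κ → (ι → ℝ)) :
    ∀ (n : ℕ) (lam : κ → ℝ), (∀ j, 0 ≤ lam j) →
      (Finset.univ.filter (fun j => lam j ≠ 0)).card ≤ n →
    ∃ (T : Finset κ), (LinearIndependent ℝ (fun j : T => v j)) ∧
      ∃ lam' : κ → ℝ, (∀ j, 0 ≤ lam' j) ∧ (∀ j, j ∉ T → lam' j = 0) ∧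
        ∑ j, lam' j • v j = ∑ j, lam j • v j := by
  classical
  intro n
  induction n with
  | zero =>
    intro lam h0 hcard
    have hz : ∀ j, lam j = 0 := by
      intro j
      by_contra hj
      have : j ∈ Finset.univ.filter (fun j => lam j ≠ 0) := by simp [hj]
      have := Finset.card_pos.2 ⟨j, this⟩
      omega
    refine ⟨∅, linearIndependent_empty_type, 0, fun j => le_rfl, fun j _ => rfl, ?_⟩
    simp [hz]
  | succ n ih =>
    intro lam h0 hcard
    set T0 := Finset.univ.filter (fun j => lam j ≠ 0) with hT0
    by_cases hsmall : T0.card ≤ n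
    · exact ih lam h0 hsmall
    by_cases hind : LinearIndependent ℝ (fun j : T0 => v j)
    · refine ⟨T0, hind, lam, h0, fun j hj => ?_, rfl⟩
      by_contra hne
      exact hj (by simp [hT0, hne])
    obtain ⟨g, hgsum, i0, hgi0⟩ := Fintype.not_linearIndependent_iff.1 hind
    set c : κ → ℝ := fun j => if h : j ∈ T0 then g ⟨j, h⟩ else 0 with hc
    have hcsum : ∑ j, c j • v j = 0 := by
      rw [← Finset.sum_subset (Finset.subset_univ T0)
        (fun j _ hj => by simp [hc, hj])]
      rw [← Finset.sum_attach T0 (fun j => c j • v j)]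
      rw [← hgsum]
      exact Finset.sum_congr rfl fun j _ => by simp [hc, j.2]
    have hcsupp : ∀ j, c j ≠ 0 → j ∈ T0 := by
      intro j hj
      by_contra hne
      exact hj (by simp [hc, hne])
    -- wlog there is a positive coordinate
    have main : ∀ c : κ → ℝ, (∑ j, c j • v j = 0) → (∀ j, c j ≠ 0 → j ∈ T0) →
        (∃ j, 0 < c j) →
        ∃ (T : Finset κ), (LinearIndependent ℝ (fun j : T => v j)) ∧
        ∃ lam' : κ → ℝ, (∀ j, 0 ≤ lam' j) ∧ (∀ j, j ∉ T → lam' j = 0) ∧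
          ∑ j, lam' j • v j = ∑ j, lam j • v j := by
      intro c hcsum hcsupp ⟨jp, hjp⟩
      set S := Finset.univ.filter (fun j => 0 < c j) with hS
      have hSne : S.Nonempty := ⟨jp, by simp [hS, hjp]⟩
      obtain ⟨jstar, hjstarS, hmin⟩ :=
        Finset.exists_min_image S (fun j => lam j / c j) hSne
      have hcjstar : 0 < c jstar := by
        have := hjstarS; simp [hS] at this; exact this
      set t := lam jstar / c jstar with ht
      have ht0 : 0 ≤ t := div_nonneg (h0 jstar) (le_of_lt hcjstar)
      set lam2 : κ → ℝ := fun j => lam j - t * c j with hlam2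
      have hlam20 : ∀ j, 0 ≤ lam2 j := by
        intro j
        rcases le_or_gt (c j) 0 with hcj | hcj
        · have : t * c j ≤ 0 := mul_nonpos_of_nonneg_of_nonpos ht0 hcj
          simp only [hlam2]; have := h0 j; linarith
        · have hjS : j ∈ S := by simp [hS, hcj]
          have := hmin j hjS
          rw [div_le_div_iff₀ hcjstar hcj] at this
          simp only [hlam2, ht]
          rw [div_mul_eq_mul_div, sub_nonneg, div_le_iff₀ hcjstar]
          linarith
      have hsum2 : ∑ j, lam2 j • v j = ∑ j, lam j • v j := by
        have : ∑ j, lam2 j • v j = ∑ j, lam j • v j - t • ∑ j, c j • v j := by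
          rw [Finset.smul_sum, ← Finset.sum_sub_distrib]
          exact Finset.sum_congr rfl fun j _ => by
            rw [sub_smul, smul_smul]
        rw [this, hcsum, smul_zero, sub_zero]
      have hstar2 : lam2 jstar = 0 := by
        simp only [hlam2, ht]
        field_simp
        ring
      have hsupp2 : Finset.univ.filter (fun j => lam2 j ≠ 0) ⊆ T0.erase jstar := by
        intro j hj
        simp only [Finset.mem_filter] at hj
        rcases hj with ⟨-, hj⟩
        rw [Finset.mem_erase]
        constructor
        · rintro rfl; exact hj hstar2
        · by_contra hne
          have h1 : lam j = 0 := by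
            by_contra hl; exact hne (by simp [hT0, hl])
          have h2 : c j = 0 := by
            by_contra hcj; exact hne (hcsupp j hcj)
          exact hj (by simp [hlam2, h1, h2])
      have hjT0 : jstar ∈ T0 := hcsupp jstar (ne_of_gt hcjstar)
      have hcard2 : (Finset.univ.filter (fun j => lam2 j ≠ 0)).card ≤ n := by
        have h1 := Finset.card_le_card hsupp2
        have h2 : (T0.erase jstar).card = T0.card - 1 :=
          Finset.card_erase_of_mem hjT0
        omega
      obtain ⟨T, hT, lam3, h3a, h3b, h3c⟩ := ih lam2 hlam20 hcard2
      exact ⟨T, hT, lam3, h3a, h3b, by rw [h3c, hsum2]⟩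
    have hci0 : c (i0 : κ) = g i0 := by simp [hc, i0.2]
    rcases lt_or_gt_of_ne hgi0 with hneg | hpos
    · -- use -c
      refine main (fun j => - c j) ?_ (fun j hj => hcsupp j (by simpa using hj)) ⟨i0, ?_⟩
      · rw [← neg_zero, ← hcsum, ← Finset.sum_neg_distrib]
        exact Finset.sum_congr rfl fun j _ => by rw [neg_smul]
      · simp only [neg_pos]; rw [hci0]; exact hneg
    · exact main c hcsum hcsupp ⟨i0, by rw [hci0]; exact hpos⟩

lemma fgCone_caratheodory (v : κ → (ι → ℝ)) {x : ι → ℝ} (hx : x ∈ fgCone v) :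
    ∃ (T : Finset κ), (LinearIndependent ℝ (fun j : T => v j)) ∧
      ∃ lam : κ → ℝ, (∀ j, 0 ≤ lam j) ∧ (∀ j, j ∉ T → lam j = 0) ∧
        x = ∑ j, lam j • v j := by
  classical
  obtain ⟨lam, h0, he⟩ := hx
  obtain ⟨T, hT, lam', h1, h2, h3⟩ := fgCone_caratheodory_aux v
    (Finset.univ.filter (fun j => lam j ≠ 0)).card lam h0 le_rfl
  exact ⟨T, hT, lam', h1, h2, by rw [he, ← h3]⟩

end Cone
end M2WU

namespace M2WU
section Farkas
variable {ι κ : Type*} [Fintype ι] [Fintype κ]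

lemma isClosed_indepCone (v : κ → (ι → ℝ)) (T : Finset κ)
    (hT : LinearIndependent ℝ (fun j : T => v j)) :
    IsClosed ((fun lam : T → ℝ => ∑ j : T, lam j • v (j : κ)) ''
      {lam | ∀ j, 0 ≤ lam j}) := by
  classical
  let L : (T → ℝ) →ₗ[ℝ] (ι → ℝ) :=
    { toFun := fun lam => ∑ j : T, lam j • v (j : κ)
      map_add' := by
        intro a b
        rw [← Finset.sum_add_distrib]
        exact Finset.sum_congr rfl fun j _ => by
          simp [add_smul]
      map_smul' := by
        intro m a
        rw [Finset.smul_sum]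
        exact Finset.sum_congr rfl fun j _ => by
          simp [smul_smul] }
  have hker : LinearMap.ker L = ⊥ := by
    rw [LinearMap.ker_eq_bot']
    intro m hm
    have := Fintype.linearIndependent_iff.1 hT m hm
    funext j
    exact this j
  have hemb := LinearMap.isClosedEmbedding_of_injective (f := L) hker
  have hclset : IsClosed {lam : T → ℝ | ∀ j, 0 ≤ lam j} := by
    have : {lam : T → ℝ | ∀ j, 0 ≤ lam j} = ⋂ j, {lam | 0 ≤ lam j} := by
      ext lam; simp [Set.mem_iInter]
    rw [this]
    exact isClosed_iInter fun j =>
      isClosed_le continuous_const (continuous_apply j)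
  exact hemb.isClosedMap _ hclset

lemma isClosed_fgCone (v : κ → (ι → ℝ)) : IsClosed (fgCone v) := by
  classical
  have heq : fgCone v = ⋃ T : Finset κ,
      if LinearIndependent ℝ (fun j : T => v j) then
        ((fun lam : T → ℝ => ∑ j : T, lam j • v (j : κ)) '' {lam | ∀ j, 0 ≤ lam j})
      else ∅ := by
    ext x
    constructor
    · intro hx
      obtain ⟨T, hT, lam, h0, hz, he⟩ := fgCone_caratheodory v hx
      refine Set.mem_iUnion.2 ⟨T, ?_⟩
      rw [if_pos hT]
      refine ⟨fun j : T => lam j, fun j => h0 j, ?_⟩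
      rw [he, ← Finset.sum_subset (Finset.subset_univ T)
        (fun j _ hj => by rw [hz j hj, zero_smul])]
      rw [← Finset.sum_attach T (fun j => lam j • v j)]
      simp [Finset.univ_eq_attach]
    · intro hx
      obtain ⟨T, hT⟩ := Set.mem_iUnion.1 hx
      by_cases h : LinearIndependent ℝ (fun j : T => v j)
      · rw [if_pos h] at hT
        obtain ⟨lam, h0, he⟩ := hT
        refine ⟨fun j => if hj : j ∈ T then lam ⟨j, hj⟩ else 0, fun j => ?_, ?_⟩
        · by_cases hj : j ∈ T <;> simp [hj, h0 _]
        · rw [← he]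
          rw [← Finset.sum_subset (Finset.subset_univ T)
            (fun j _ hj => by simp [hj])]
          rw [← Finset.sum_attach T
            (fun j => (if hj : j ∈ T then lam ⟨j, hj⟩ else 0) • v j)]
          exact Finset.sum_congr rfl fun j _ => by simp [j.2]
      · rw [if_neg h] at hT; exact absurd hT (Set.notMem_empty x)
  rw [heq]
  refine isClosed_iUnion_of_finite fun T => ?_
  by_cases h : LinearIndependent ℝ (fun j : T => v j)
  · rw [if_pos h]; exact isClosed_indepCone v T h
  · rw [if_neg h]; exact isClosed_empty

/-- Farkas' lemma: either `M z ≤ b` is solvable, or there is a nonnegative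
linear combination of rows vanishing with negative rhs. -/
lemma farkas (M : ι → κ → ℝ) (b : ι → ℝ)
    (h : ¬ ∃ z : κ → ℝ, ∀ i, ∑ j, M i j * z j ≤ b i) :
    ∃ w : ι → ℝ, (∀ i, 0 ≤ w i) ∧ (∀ j, ∑ i, w i * M i j = 0) ∧ ∑ i, w i * b i < 0 := by
  classical
  set fam : (κ ⊕ κ ⊕ ι) → (ι → ℝ) :=
    Sum.elim (fun j => fun i => M i j)
      (Sum.elim (fun j => fun i => - M i j) (fun i0 => Pi.single i0 1)) with hfam
  have hb : b ∉ fgCone fam := by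
    rintro ⟨lam, h0, he⟩
    refine h ⟨fun j => lam (Sum.inl j) - lam (Sum.inr (Sum.inl j)), fun i => ?_⟩
    have hei : b i = (∑ j, lam (Sum.inl j) * M i j)
        + ((∑ j, lam (Sum.inr (Sum.inl j)) * (- M i j))
          + (∑ i0, lam (Sum.inr (Sum.inr i0)) * (Pi.single i0 1 : ι → ℝ) i)) := by
      have := congrFun he i
      rw [this]
      rw [Fintype.sum_sum_type, Fintype.sum_sum_type]
      simp [hfam]
    have hsingle : ∑ i0, lam (Sum.inr (Sum.inr i0)) * (Pi.single i0 1 : ι → ℝ) i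
        = lam (Sum.inr (Sum.inr i)) := by
      rw [Finset.sum_eq_single i]
      · simp
      · intro j _ hj; simp [Pi.single_apply, hj]
      · intro hni; exact absurd (Finset.mem_univ i) hni
    have hnn := h0 (Sum.inr (Sum.inr i))
    have : ∑ j, M i j * (lam (Sum.inl j) - lam (Sum.inr (Sum.inl j)))
        = b i - lam (Sum.inr (Sum.inr i)) := by
      rw [hei, hsingle]
      have he2 : ∑ j, M i j * (lam (Sum.inl j) - lam (Sum.inr (Sum.inl j)))
          = ∑ j, (lam (Sum.inl j) * M i j + lam (Sum.inr (Sum.inl j)) * - M i j) :=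
        Finset.sum_congr rfl fun j _ => by ring
      rw [he2, Finset.sum_add_distrib]
      ring
    rw [this]
    linarith
  obtain ⟨f, α, hfb, hfC⟩ :=
    geometric_hahn_banach_point_closed (convex_fgCone fam) (isClosed_fgCone fam) hb
  have hα0 : α < 0 := by
    have := hfC 0 (zero_mem_fgCone fam)
    simpa using this
  have hf0 : ∀ y ∈ fgCone fam, 0 ≤ f y := by
    intro y hy
    by_contra hneg
    push_neg at hneg
    have hdiv : 0 ≤ (α - 1) / f y := by
      rw [le_div_iff_of_neg hneg]
      linarith
    have hmem := smul_mem_fgCone fam (t := (α - 1) / f y) hdiv hy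
    have := hfC _ hmem
    rw [map_smul, smul_eq_mul, div_mul_cancel₀ _ (ne_of_lt hneg)] at this
    linarith
  set w : ι → ℝ := fun i => f (Pi.single i 1) with hw
  have hfrep : ∀ z : ι → ℝ, f z = ∑ i, z i * w i := by
    intro z
    conv_lhs => rw [pi_eq_sum_univ z]
    rw [map_sum]
    refine Finset.sum_congr rfl fun i _ => ?_
    rw [map_smul, smul_eq_mul]
    have hsing : (fun j => if i = j then (1:ℝ) else 0) = (Pi.single i 1 : ι → ℝ) := by
      funext j
      simp [Pi.single_apply, eq_comm]
    rw [hsing]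
  refine ⟨w, fun i => hf0 _ (gen_mem_fgCone fam (Sum.inr (Sum.inr i))), fun j => ?_, ?_⟩
  · have h1 := hf0 _ (gen_mem_fgCone fam (Sum.inl j))
    have h2 := hf0 _ (gen_mem_fgCone fam (Sum.inr (Sum.inl j)))
    rw [hfrep] at h1 h2
    simp only [hfam, Sum.elim_inl, Sum.elim_inr] at h1 h2
    have he : ∑ i, (- M i j) * w i = - ∑ i, M i j * w i := by
      rw [← Finset.sum_neg_distrib]
      exact Finset.sum_congr rfl fun i _ => by ring
    rw [he] at h2
    have : ∑ i, M i j * w i = 0 := le_antisymm (by linarith) h1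
    rw [← this]
    exact Finset.sum_congr rfl fun i _ => by ring
  · have h1 : ∑ i, w i * b i = f b := by
      rw [hfrep b]
      exact Finset.sum_congr rfl fun i _ => by ring
    rw [h1]
    linarith

end Farkas
end M2WU

namespace M2WU
section Tucker
variable {ι : Type*} [Fintype ι] [DecidableEq ι]

lemma tucker (K : ι → ι → ℝ) (hskew : ∀ i j, K i j = - K j i) :
    ∃ z : ι → ℝ, (∀ i, 0 ≤ z i) ∧ (∀ i, 0 ≤ ∑ j, K i j * z j) ∧
      (∀ i, 0 < z i + ∑ j, K i j * z j) := by
  classical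
  have alt : ∀ i0 : ι, ∃ z : ι → ℝ, (∀ i, 0 ≤ z i) ∧ (∀ i, 0 ≤ ∑ j, K i j * z j) ∧
      (0 < z i0 + ∑ j, K i0 j * z j) := by
    intro i0
    by_cases hfeas : ∃ z : ι → ℝ, (∀ i, 0 ≤ z i) ∧ (∀ i, 0 ≤ ∑ j, K i j * z j) ∧ 0 < z i0
    · obtain ⟨z, h1, h2, h3⟩ := hfeas
      exact ⟨z, h1, h2, by have := h2 i0; linarith⟩
    · set Mm : (ι ⊕ ι ⊕ Unit) → ι → ℝ :=
        Sum.elim (fun i => fun j => - (if i = j then 1 else 0))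
          (Sum.elim (fun i => fun j => - K i j) (fun _ => fun j => - (if i0 = j then 1 else 0)))
        with hMm
      set bb : (ι ⊕ ι ⊕ Unit) → ℝ :=
        Sum.elim (fun _ => 0) (Sum.elim (fun _ => 0) (fun _ => -1)) with hbb
      have hinf : ¬ ∃ z : ι → ℝ, ∀ c, ∑ j, Mm c j * z j ≤ bb c := by
        rintro ⟨z, hz⟩
        have hsingle : ∀ i : ι, ∑ j, (- (if i = j then (1:ℝ) else 0)) * z j = - z i := by
          intro i
          rw [Finset.sum_eq_single i]
          · simp
          · intro j _ hj; simp [Ne.symm hj]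
          · intro hni; exact absurd (Finset.mem_univ i) hni
        have h1 : ∀ i, 0 ≤ z i := by
          intro i
          have := hz (Sum.inl i)
          rw [hMm, hbb] at this
          simp only [Sum.elim_inl] at this
          rw [hsingle i] at this
          linarith
        have h2 : ∀ i, 0 ≤ ∑ j, K i j * z j := by
          intro i
          have := hz (Sum.inr (Sum.inl i))
          rw [hMm, hbb] at this
          simp only [Sum.elim_inl, Sum.elim_inr] at this
          have he : ∑ j, (- K i j) * z j = - ∑ j, K i j * z j := by
            rw [← Finset.sum_neg_distrib]
            exact Finset.sum_congr rfl fun j _ => by ring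
          rw [he] at this
          linarith
        have h3 : 0 < z i0 := by
          have := hz (Sum.inr (Sum.inr ()))
          rw [hMm, hbb] at this
          simp only [Sum.elim_inr] at this
          rw [hsingle i0] at this
          linarith
        exact hfeas ⟨z, h1, h2, h3⟩
      obtain ⟨w, hw0, hwM, hwb⟩ := farkas Mm bb hinf
      set β : ι → ℝ := fun i => w (Sum.inr (Sum.inl i)) with hβ
      have hγ : 0 < w (Sum.inr (Sum.inr ())) := by
        by_contra hγ
        push_neg at hγ
        have : ∑ c, w c * bb c = - w (Sum.inr (Sum.inr ())) := by
          rw [Fintype.sum_sum_type, Fintype.sum_sum_type]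
          simp [hbb]
        rw [this] at hwb
        linarith
      have hKβ : ∀ j, ∑ i, K j i * β i
          = w (Sum.inl j) + (if i0 = j then 1 else 0) * w (Sum.inr (Sum.inr ())) := by
        intro j
        have := hwM j
        rw [Fintype.sum_sum_type, Fintype.sum_sum_type] at this
        simp only [hMm, Sum.elim_inl, Sum.elim_inr] at this
        have e1 : ∑ i, w (Sum.inl i) * - (if i = j then (1:ℝ) else 0) = - w (Sum.inl j) := by
          rw [Finset.sum_eq_single j]
          · simp
          · intro i _ hi; simp [hi]
          · intro hni; exact absurd (Finset.mem_univ j) hni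
        have e2 : ∑ x : Unit, w (Sum.inr (Sum.inr x)) * - (if i0 = j then (1:ℝ) else 0)
            = - ((if i0 = j then 1 else 0) * w (Sum.inr (Sum.inr ()))) := by
          simp [mul_comm]
        rw [e1, e2] at this
        have e3 : ∑ i, w (Sum.inr (Sum.inl i)) * - K i j = - ∑ i, K i j * w (Sum.inr (Sum.inl i)) := by
          rw [← Finset.sum_neg_distrib]
          exact Finset.sum_congr rfl fun i _ => by ring
        rw [e3] at this
        have e4 : ∑ i, K j i * β i = - ∑ i, K i j * w (Sum.inr (Sum.inl i)) := by
          rw [← Finset.sum_neg_distrib]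
          refine Finset.sum_congr rfl fun i _ => ?_
          rw [hskew j i, hβ]
          ring
        rw [e4]
        linarith
      refine ⟨β, fun i => hw0 _, fun i => ?_, ?_⟩
      · rw [hKβ i]
        have := hw0 (Sum.inl i)
        have hnn : 0 ≤ (if i0 = i then (1:ℝ) else 0) * w (Sum.inr (Sum.inr ())) := by
          split
          · linarith
          · simp
        linarith
      · rw [hKβ i0, if_pos rfl, one_mul]
        have h1 := hw0 (Sum.inl i0)
        have h2 : (0:ℝ) ≤ β i0 := hw0 _
        linarith
  choose zf hz1 hz2 hz3 using alt
  refine ⟨fun j => ∑ i0, zf i0 j, fun i => Finset.sum_nonneg fun i0 _ => hz1 i0 i, ?_, ?_⟩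
  · intro i
    have he : ∑ j, K i j * ∑ i0, zf i0 j = ∑ i0, ∑ j, K i j * zf i0 j := by
      rw [Finset.sum_comm]
      exact Finset.sum_congr rfl fun j _ => by rw [Finset.mul_sum]
    rw [he]
    exact Finset.sum_nonneg fun i0 _ => hz2 i0 i
  · intro i
    have he : ∑ j, K i j * ∑ i0, zf i0 j = ∑ i0, ∑ j, K i j * zf i0 j := by
      rw [Finset.sum_comm]
      exact Finset.sum_congr rfl fun j _ => by rw [Finset.mul_sum]
    rw [he, ← Finset.sum_add_distrib]
    have : ∀ i0, 0 ≤ zf i0 i + ∑ j, K i j * zf i0 j := fun i0 =>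
      add_nonneg (hz1 i0 i) (hz2 i0 i)
    calc (0:ℝ) < zf i i + ∑ j, K i j * zf i j := hz3 i
    _ ≤ ∑ i0, (zf i0 i + ∑ j, K i j * zf i0 j) :=
        Finset.single_le_sum (fun i0 _ => this i0) (Finset.mem_univ i)

end Tucker
end M2WU

namespace M2WU
section GT
variable {A1 A2 : Type*} [Fintype A1] [Fintype A2] [Nonempty A1] [Nonempty A2]

/-- Goldman–Tucker: existence of a strictly complementary Nash pair. -/
lemma exists_strict_comp (u : A1 → A2 → ℝ) {η0 : (A1 → ℝ) × (A2 → ℝ)}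
    (hη0 : isNash u η0) :
    ∃ (xh : A1 → ℝ) (yh : A2 → ℝ) (vs : ℝ), isSimplex xh ∧ isSimplex yh ∧
      (∀ a, q1 u yh a ≤ vs) ∧ (∀ b, vs ≤ ∑ a, xh a * u a b) ∧
      (∀ a, 0 < xh a ∨ q1 u yh a < vs) ∧
      (∀ b, 0 < yh b ∨ vs < ∑ a, xh a * u a b) := by
  classical
  set vs := v1 u η0.1 η0.2 with hvs
  set K : A1 ⊕ A2 → A1 ⊕ A2 → ℝ :=
    Sum.elim (fun a => Sum.elim (fun _ => (0:ℝ)) (fun b => vs - u a b))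
             (fun b => Sum.elim (fun a => u a b - vs) (fun _ => (0:ℝ))) with hK
  have hskew : ∀ i j, K i j = - K j i := by
    intro i j
    rcases i with a | b <;> rcases j with a' | b' <;> simp [hK]
  obtain ⟨z, hz0, hzK, hzs⟩ := tucker K hskew
  set p : A1 → ℝ := fun a => z (Sum.inl a) with hp
  set q : A2 → ℝ := fun b => z (Sum.inr b) with hq
  have hrowsum : ∀ a, ∑ j, K (Sum.inl a) j * z j = ∑ b, (vs - u a b) * q b := by
    intro a
    rw [Fintype.sum_sum_type]
    simp [hK, hq]
  have hcolsum : ∀ b, ∑ j, K (Sum.inr b) j * z j = ∑ a, (u a b - vs) * p a := by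
    intro b
    rw [Fintype.sum_sum_type]
    simp [hK, hp]
  have hrow : ∀ a, 0 ≤ ∑ b, (vs - u a b) * q b := fun a => by
    have := hzK (Sum.inl a); rwa [hrowsum a] at this
  have hcol : ∀ b, 0 ≤ ∑ a, (u a b - vs) * p a := fun b => by
    have := hzK (Sum.inr b); rwa [hcolsum b] at this
  have hstrict1 : ∀ a, 0 < p a ∨ 0 < ∑ b, (vs - u a b) * q b := by
    intro a
    have := hzs (Sum.inl a)
    rw [hrowsum a] at this
    rcases lt_or_eq_of_le (hz0 (Sum.inl a)) with h | h
    · exact Or.inl h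
    · right
      have hpa : p a = z (Sum.inl a) := rfl
      linarith [hpa, this]
  have hstrict2 : ∀ b, 0 < q b ∨ 0 < ∑ a, (u a b - vs) * p a := by
    intro b
    have := hzs (Sum.inr b)
    rw [hcolsum b] at this
    rcases lt_or_eq_of_le (hz0 (Sum.inr b)) with h | h
    · exact Or.inl h
    · right
      have hqb : q b = z (Sum.inr b) := rfl
      linarith [hqb, this]
  set sp := ∑ a, p a with hsp
  set sq := ∑ b, q b with hsqd
  have hp0 : ∀ a, 0 ≤ p a := fun a => hz0 _
  have hq0 : ∀ b, 0 ≤ q b := fun b => hz0 _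
  -- positivity of the total masses
  have hsq : 0 < sq := by
    rcases lt_or_eq_of_le (Finset.sum_nonneg fun b _ => hq0 b) with h | h
    · exact h
    have hqz : ∀ b, q b = 0 := by
      intro b
      have := (Finset.sum_eq_zero_iff_of_nonneg (fun b _ => hq0 b)).1 h.symm
      exact this b (Finset.mem_univ b)
    have hppos : ∀ a, 0 < p a := by
      intro a
      rcases hstrict1 a with h' | h'
      · exact h'
      · exfalso
        have : ∑ b, (vs - u a b) * q b = 0 :=
          Finset.sum_eq_zero fun b _ => by rw [hqz b, mul_zero]
        rw [this] at h'
        exact lt_irrefl 0 h'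
    have hcolpos : ∀ b, 0 < ∑ a, (u a b - vs) * p a := by
      intro b
      rcases hstrict2 b with h' | h'
      · rw [hqz b] at h'; exact absurd h' (lt_irrefl 0)
      · exact h'
    have hsppos : 0 < sp := by
      obtain a := Classical.arbitrary A1
      exact Finset.sum_pos (fun a _ => hppos a) ⟨a, Finset.mem_univ a⟩
    -- normalized xt beats vs strictly against every column: contradiction
    set xt : A1 → ℝ := fun a => p a / sp with hxt
    have hxts : isSimplex xt := by
      constructor
      · intro a; exact div_nonneg (hp0 a) (le_of_lt hsppos)
      · rw [hxt, ← Finset.sum_div, ← hsp, div_self (ne_of_gt hsppos)]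
    have hcolxt : ∀ b, vs < ∑ a, xt a * u a b := by
      intro b
      have h' := hcolpos b
      have e : ∑ a, (u a b - vs) * p a = (∑ a, p a * u a b) - vs * sp := by
        rw [hsp, Finset.mul_sum, ← Finset.sum_sub_distrib]
        exact Finset.sum_congr rfl fun a _ => by ring
      rw [e] at h'
      have e2 : ∑ a, xt a * u a b = (∑ a, p a * u a b) / sp := by
        rw [Finset.sum_div]
        exact Finset.sum_congr rfl fun a _ => by rw [hxt]; ring
      rw [e2, lt_div_iff₀ hsppos]
      linarith
    have hv := hη0.2.2.2 xt hxts
    have hvv : v1 u xt η0.2 = ∑ b, η0.2 b * ∑ a, xt a * u a b := by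
      unfold v1
      rw [Finset.sum_comm]
      refine Finset.sum_congr rfl fun b _ => ?_
      rw [Finset.mul_sum]
      exact Finset.sum_congr rfl fun a _ => by ring
    obtain ⟨b0, hb0⟩ : ∃ b, η0.2 b ≠ 0 := by
      by_contra hall
      push_neg at hall
      have := hη0.2.1.2
      rw [Finset.sum_eq_zero (fun b _ => hall b)] at this
      norm_num at this
    have hb0pos : 0 < η0.2 b0 := lt_of_le_of_ne (hη0.2.1.1 b0) (Ne.symm hb0)
    have : vs < v1 u xt η0.2 := by
      rw [hvv]
      calc vs = ∑ b, η0.2 b * vs := by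
            rw [← Finset.sum_mul, hη0.2.1.2, one_mul]
      _ < ∑ b, η0.2 b * ∑ a, xt a * u a b := by
            refine Finset.sum_lt_sum (fun b _ => ?_) ⟨b0, Finset.mem_univ b0, ?_⟩
            · exact mul_le_mul_of_nonneg_left (le_of_lt (hcolxt b)) (hη0.2.1.1 b)
            · exact mul_lt_mul_of_pos_left (hcolxt b0) hb0pos
    rw [hvs] at *
    linarith
  have hsp2 : 0 < sp := by
    rcases lt_or_eq_of_le (Finset.sum_nonneg fun a _ => hp0 a) with h | h
    · exact h
    have hpz : ∀ a, p a = 0 := by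
      intro a
      have := (Finset.sum_eq_zero_iff_of_nonneg (fun a _ => hp0 a)).1 h.symm
      exact this a (Finset.mem_univ a)
    have hqpos : ∀ b, 0 < q b := by
      intro b
      rcases hstrict2 b with h' | h'
      · exact h'
      · exfalso
        have : ∑ a, (u a b - vs) * p a = 0 :=
          Finset.sum_eq_zero fun a _ => by rw [hpz a, mul_zero]
        rw [this] at h'
        exact lt_irrefl 0 h'
    have hrowneg : ∀ a, 0 < ∑ b, (vs - u a b) * q b := by
      intro a
      rcases hstrict1 a with h' | h'
      · rw [hpz a] at h'; exact absurd h' (lt_irrefl 0)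
      · exact h'
    have hsqpos : 0 < sq := hsq
    set yt : A2 → ℝ := fun b => q b / sq with hyt
    have hyts : isSimplex yt := by
      constructor
      · intro b; exact div_nonneg (hq0 b) (le_of_lt hsqpos)
      · rw [hyt, ← Finset.sum_div, ← hsqd, div_self (ne_of_gt hsqpos)]
    have hrowyt : ∀ a, q1 u yt a < vs := by
      intro a
      have h' := hrowneg a
      have e : ∑ b, (vs - u a b) * q b = vs * sq - ∑ b, q b * u a b := by
        rw [hsqd, Finset.mul_sum, ← Finset.sum_sub_distrib]
        exact Finset.sum_congr rfl fun b _ => by ring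
      rw [e] at h'
      have e2 : q1 u yt a = (∑ b, q b * u a b) / sq := by
        unfold q1
        rw [Finset.sum_div]
        exact Finset.sum_congr rfl fun b _ => by rw [hyt]; ring
      rw [e2, div_lt_iff₀ hsqpos]
      linarith
    have hv := hη0.2.2.1 yt hyts
    obtain ⟨a0, ha0⟩ : ∃ a, η0.1 a ≠ 0 := by
      by_contra hall
      push_neg at hall
      have := hη0.1.2
      rw [Finset.sum_eq_zero (fun a _ => hall a)] at this
      norm_num at this
    have ha0pos : 0 < η0.1 a0 := lt_of_le_of_ne (hη0.1.1 a0) (Ne.symm ha0)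
    have : v1 u η0.1 yt < vs := by
      rw [v1_sum_q1]
      calc ∑ a, η0.1 a * q1 u yt a < ∑ a, η0.1 a * vs := by
            refine Finset.sum_lt_sum (fun a _ => ?_) ⟨a0, Finset.mem_univ a0, ?_⟩
            · exact mul_le_mul_of_nonneg_left (le_of_lt (hrowyt a)) (hη0.1.1 a)
            · exact mul_lt_mul_of_pos_left (hrowyt a0) ha0pos
      _ = vs := by rw [← Finset.sum_mul, hη0.1.2, one_mul]
    rw [hvs] at *
    linarith
  -- the strictly complementary pair
  refine ⟨fun a => p a / sp, fun b => q b / sq, vs,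
    ⟨fun a => div_nonneg (hp0 a) (le_of_lt hsp2), by
      rw [← Finset.sum_div, ← hsp, div_self (ne_of_gt hsp2)]⟩,
    ⟨fun b => div_nonneg (hq0 b) (le_of_lt hsq), by
      rw [← Finset.sum_div, ← hsqd, div_self (ne_of_gt hsq)]⟩,
    ?_, ?_, ?_, ?_⟩
  · intro a
    have h' := hrow a
    have e : ∑ b, (vs - u a b) * q b = vs * sq - ∑ b, q b * u a b := by
      rw [hsqd, Finset.mul_sum, ← Finset.sum_sub_distrib]
      exact Finset.sum_congr rfl fun b _ => by ring
    rw [e] at h'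
    have e2 : q1 u (fun b => q b / sq) a = (∑ b, q b * u a b) / sq := by
      unfold q1
      rw [Finset.sum_div]
      exact Finset.sum_congr rfl fun b _ => by ring
    rw [e2, div_le_iff₀ hsq]
    linarith
  · intro b
    have h' := hcol b
    have e : ∑ a, (u a b - vs) * p a = (∑ a, p a * u a b) - vs * sp := by
      rw [hsp, Finset.mul_sum, ← Finset.sum_sub_distrib]
      exact Finset.sum_congr rfl fun a _ => by ring
    rw [e] at h'
    have e2 : ∑ a, (p a / sp) * u a b = (∑ a, p a * u a b) / sp := by
      rw [Finset.sum_div]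
      exact Finset.sum_congr rfl fun a _ => by ring
    rw [e2, le_div_iff₀ hsp2]
    linarith
  · intro a
    rcases hstrict1 a with h' | h'
    · exact Or.inl (div_pos h' hsp2)
    · right
      have e : ∑ b, (vs - u a b) * q b = vs * sq - ∑ b, q b * u a b := by
        rw [hsqd, Finset.mul_sum, ← Finset.sum_sub_distrib]
        exact Finset.sum_congr rfl fun b _ => by ring
      rw [e] at h'
      have e2 : q1 u (fun b => q b / sq) a = (∑ b, q b * u a b) / sq := by
        unfold q1
        rw [Finset.sum_div]
        exact Finset.sum_congr rfl fun b _ => by ring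
      rw [e2, div_lt_iff₀ hsq]
      linarith
  · intro b
    rcases hstrict2 b with h' | h'
    · exact Or.inl (div_pos h' hsq)
    · right
      have e : ∑ a, (u a b - vs) * p a = (∑ a, p a * u a b) - vs * sp := by
        rw [hsp, Finset.mul_sum, ← Finset.sum_sub_distrib]
        exact Finset.sum_congr rfl fun a _ => by ring
      rw [e] at h'
      have e2 : ∑ a, (p a / sp) * u a b = (∑ a, p a * u a b) / sp := by
        rw [Finset.sum_div]
        exact Finset.sum_congr rfl fun a _ => by ring
      rw [e2, lt_div_iff₀ hsp2]
      linarith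

end GT
end M2WU

namespace M2WU
open Filter Topology

lemma klf_one : klf 1 = 0 := by simp [klf]

lemma klf_deriv {x : ℝ} (hx : x ≠ 0) : HasDerivAt klf (1 - x⁻¹) x := by
  have h1 : HasDerivAt (fun y : ℝ => y - 1) 1 x := (hasDerivAt_id x).sub_const 1
  have h2 := Real.hasDerivAt_log hx
  exact h1.sub h2

lemma klf_contOn : ContinuousOn klf {x : ℝ | x ≠ 0} := by
  intro x hx
  exact ((klf_deriv hx).continuousAt).continuousWithinAt

lemma klf_strictMono : StrictMonoOn klf (Set.Ici 1) := by
  refine strictMonoOn_of_deriv_pos (convex_Ici 1) (klf_contOn.mono ?_) ?_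
  · intro x hx
    simp only [Set.mem_Ici] at hx
    simp only [Set.mem_setOf_eq]
    linarith
  · intro x hx
    rw [interior_Ici] at hx
    simp only [Set.mem_Ioi] at hx
    rw [HasDerivAt.deriv (klf_deriv (by positivity))]
    have : x⁻¹ < 1 := by
      rw [inv_lt_one_iff₀]
      right; exact hx
    linarith

lemma klf_strictAnti : StrictAntiOn klf (Set.Ioc 0 1) := by
  refine strictAntiOn_of_deriv_neg (convex_Ioc 0 1) (klf_contOn.mono ?_) ?_
  · intro x hx
    simp only [Set.mem_Ioc] at hx
    simp only [Set.mem_setOf_eq]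
    linarith [hx.1]
  · intro x hx
    rw [interior_Ioc] at hx
    simp only [Set.mem_Ioo] at hx
    rw [HasDerivAt.deriv (klf_deriv (ne_of_gt hx.1))]
    have hxi : 0 < x⁻¹ := inv_pos.2 hx.1
    have hxx : x * x⁻¹ = 1 := mul_inv_cancel₀ (ne_of_gt hx.1)
    nlinarith [hx.1, hx.2]

lemma klf_pos_lt {x : ℝ} (hx : 0 < x) (hlt : x < 1) : 0 < klf x := by
  have := klf_strictAnti (Set.mem_Ioc.2 ⟨hx, le_of_lt hlt⟩) (Set.mem_Ioc.2 ⟨one_pos, le_rfl⟩) hlt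
  rwa [klf_one] at this

lemma klf_pos_gt {x : ℝ} (hgt : 1 < x) : 0 < klf x := by
  have := klf_strictMono (Set.mem_Ici.2 le_rfl) (Set.mem_Ici.2 (le_of_lt hgt)) hgt
  rwa [klf_one] at this

/-- If `klf (x k) → 0` for positive `x k` then `x k → 1`. -/
lemma tendsto_one_of_klf {x : ℕ → ℝ} (hx : ∀ k, 0 < x k)
    (h : Tendsto (fun k => klf (x k)) atTop (nhds 0)) :
    Tendsto x atTop (nhds 1) := by
  rw [Metric.tendsto_atTop]
  intro ε hε
  set ε' := min ε (1/2) with hε'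
  have hε'0 : 0 < ε' := lt_min hε (by norm_num)
  have hε'le : ε' ≤ 1/2 := min_le_right _ _
  set c := min (klf (1 - ε')) (klf (1 + ε')) with hc
  have hc0 : 0 < c := by
    refine lt_min (klf_pos_lt (by linarith) (by linarith)) (klf_pos_gt (by linarith))
  obtain ⟨N, hN⟩ := (Metric.tendsto_atTop.1 h) c hc0
  refine ⟨N, fun k hk => ?_⟩
  have hNk := hN k hk
  rw [Real.dist_eq, sub_zero] at hNk
  have hklf : klf (x k) < c := lt_of_abs_lt hNk
  rw [Real.dist_eq]
  have h1 : 1 - ε' < x k := by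
    by_contra hle
    push_neg at hle
    have hxk1 : x k ∈ Set.Ioc (0:ℝ) 1 := ⟨hx k, by linarith⟩
    have h1e : (1 - ε') ∈ Set.Ioc (0:ℝ) 1 := ⟨by linarith, by linarith⟩
    rcases lt_or_eq_of_le hle with hlt | heq
    · have := klf_strictAnti hxk1 h1e hlt
      have := klf_pos_lt (hx k) (by linarith)
      have hge : klf (1 - ε') < klf (x k) := by
        exact klf_strictAnti hxk1 h1e hlt
      have : c ≤ klf (1 - ε') := min_le_left _ _
      linarith
    · rw [heq] at hklf
      have : c ≤ klf (1 - ε') := min_le_left _ _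
      linarith
  have h2 : x k < 1 + ε' := by
    by_contra hle
    push_neg at hle
    rcases lt_or_eq_of_le hle with hlt | heq
    · have hge : klf (1 + ε') < klf (x k) :=
        klf_strictMono (Set.mem_Ici.2 (by linarith)) (Set.mem_Ici.2 (by linarith)) hlt
      have : c ≤ klf (1 + ε') := min_le_right _ _
      linarith
    · rw [← heq] at hklf
      have : c ≤ klf (1 + ε') := min_le_right _ _
      linarith
  have : |x k - 1| < ε' := abs_sub_lt_iff.2 ⟨by linarith, by linarith⟩
  exact lt_of_lt_of_le this (min_le_left _ _)

/-- Quasi-Fejér sequences converge. -/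
lemma quasi_fejer {a c : ℕ → ℝ} (ha0 : ∀ k, 0 ≤ a k) (hc0 : ∀ k, 0 ≤ c k)
    (hstep : ∀ k, a (k + 1) ≤ a k + c k) (hsum : Summable c) :
    ∃ L, Tendsto a atTop (nhds L) := by
  set t : ℕ → ℝ := fun k => a k + ∑' j, c (j + k) with ht
  have htail : ∀ k, Summable (fun j => c (j + k)) := fun k =>
    (summable_nat_add_iff k).2 hsum
  have htail_shift : ∀ k, ∑' j, c (j + k) = c k + ∑' j, c (j + (k + 1)) := by
    intro k
    rw [Summable.tsum_eq_zero_add (htail k)]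
    congr 1
    · simp
    · apply tsum_congr
      intro j
      congr 1
      omega
  have hanti : Antitone t := by
    apply antitone_nat_of_succ_le
    intro k
    have h1 := hstep k
    have h2 := htail_shift k
    simp only [ht]
    linarith
  have hbdd : BddBelow (Set.range t) := by
    refine ⟨0, fun y hy => ?_⟩
    obtain ⟨k, rfl⟩ := hy
    exact add_nonneg (ha0 k) (tsum_nonneg fun j => hc0 _)
  have hconv : Tendsto t atTop (nhds (⨅ k, t k)) :=
    tendsto_atTop_ciInf hanti hbdd
  have htail0 : Tendsto (fun k => ∑' j, c (j + k)) atTop (nhds 0) :=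
    tendsto_sum_nat_add c
  refine ⟨(⨅ k, t k) - 0, ?_⟩
  have := hconv.sub htail0
  have he : (fun k => t k - ∑' j, c (j + k)) = a := by
    funext k
    simp [ht]
  rwa [he] at this

/-- Coordinatewise lower bound on the second argument from a `KL` upper bound. -/
lemma coord_lb {A : Type*} [Fintype A] {p q : A → ℝ} (hp : isSimplex p)
    (hq0 : ∀ x, 0 < q x) (hq1 : ∑ x, q x = 1) {C : ℝ} (hC : KL p q ≤ C)
    {a : A} (ha : 0 < p a) : p a * Real.exp (-((C + 1) / p a)) ≤ q a := by
  have hterm : p a * Real.log (p a / q a) - p a + q a ≤ C := by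
    have h1 : KL p q = ∑ x, (p x * Real.log (p x / q x) - p x + q x) :=
      KL_eq_termf hp.2 hq1
    have h2 : p a * Real.log (p a / q a) - p a + q a
        ≤ ∑ x, (p x * Real.log (p x / q x) - p x + q x) :=
      Finset.single_le_sum (fun x _ => termf_nonneg (hp.1 x) (hq0 x)) (Finset.mem_univ a)
    linarith
  have hlog : Real.log (p a / q a) ≤ (C + 1) / p a := by
    rw [le_div_iff₀ ha]
    have hqa := hq0 a
    have hpa1 : p a ≤ 1 := isSimplex_le_one hp a
    nlinarith
  have hexp : p a / q a ≤ Real.exp ((C + 1) / p a) := by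
    calc p a / q a = Real.exp (Real.log (p a / q a)) :=
          (Real.exp_log (div_pos ha (hq0 a))).symm
    _ ≤ _ := Real.exp_le_exp.2 hlog
  rw [div_le_iff₀ (hq0 a)] at hexp
  rw [Real.exp_neg, mul_inv_le_iff₀ (Real.exp_pos _)]
  nlinarith [hexp]

lemma KL2_nonneg {A1 A2 : Type*} [Fintype A1] [Fintype A2]
    {η q : (A1 → ℝ) × (A2 → ℝ)} (h1 : isSimplex η.1) (h2 : isSimplex η.2)
    (hq1 : isInterior q.1) (hq2 : isInterior q.2) : 0 ≤ KL2 η q :=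
  add_nonneg (KL_nonneg h1 hq1.1 hq1.2) (KL_nonneg h2 hq2.1 hq2.2)

section cont
variable {A1 A2 : Type*} [Fintype A1] [Fintype A2] {u : A1 → A2 → ℝ}

lemma tendsto_q1 {y : ℕ → A2 → ℝ} {ψ : A2 → ℝ}
    (hy : ∀ b, Tendsto (fun j => y j b) atTop (nhds (ψ b))) (a : A1) :
    Tendsto (fun j => q1 u (y j) a) atTop (nhds (q1 u ψ a)) := by
  unfold q1
  exact tendsto_finset_sum _ fun b _ => (hy b).mul_const (u a b)

lemma tendsto_q2 {x : ℕ → A1 → ℝ} {ξ : A1 → ℝ}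
    (hx : ∀ a, Tendsto (fun j => x j a) atTop (nhds (ξ a))) (b : A2) :
    Tendsto (fun j => q2 u (x j) b) atTop (nhds (q2 u ξ b)) := by
  unfold q2
  exact tendsto_finset_sum _ fun a _ => (hx a).mul_const (- u a b)

lemma tendsto_v1 {x : ℕ → A1 → ℝ} {ξ : A1 → ℝ} {y : ℕ → A2 → ℝ} {ψ : A2 → ℝ}
    (hx : ∀ a, Tendsto (fun j => x j a) atTop (nhds (ξ a)))
    (hy : ∀ b, Tendsto (fun j => y j b) atTop (nhds (ψ b))) :
    Tendsto (fun j => v1 u (x j) (y j)) atTop (nhds (v1 u ξ ψ)) := by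
  unfold v1
  refine tendsto_finset_sum _ fun a _ => tendsto_finset_sum _ fun b _ => ?_
  exact (((hx a).mul (hy b)).mul_const (u a b))

end cont
end M2WU

namespace M2WU
open Filter Topology

variable {A1 A2 : Type*} [Fintype A1] [Fintype A2]

lemma v1_cols (u : A1 → A2 → ℝ) (x : A1 → ℝ) (y : A2 → ℝ) :
    v1 u x y = ∑ b, y b * ∑ a, x a * u a b := by
  unfold v1
  rw [Finset.sum_comm]
  refine Finset.sum_congr rfl fun b _ => ?_
  rw [Finset.mul_sum]
  exact Finset.sum_congr rfl fun a _ => by ring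

lemma interior_toSimplex {A : Type*} [Fintype A] {p : A → ℝ}
    (h : isInterior p) : isSimplex p := ⟨fun a => le_of_lt (h.1 a), h.2⟩

variable [Nonempty A1] [Nonempty A2]
  {u : A1 → A2 → ℝ} {μ : ℝ} {r : ℕ → (A1 → ℝ) × (A2 → ℝ)}

/-- telescoping bound -/
lemma sum_le_KL2_init (hμ : 0 < μ)
    (hrint : ∀ k, isInterior (r k).1 ∧ isInterior (r k).2)
    {η : (A1 → ℝ) × (A2 → ℝ)} (hη1 : isSimplex η.1) (hη2 : isSimplex η.2)
    {c : ℕ → ℝ} (hc : ∀ k, c k ≤ KL2 η (r k) - KL2 η (r (k + 1))) (K : ℕ) :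
    ∑ k ∈ Finset.range K, c k ≤ KL2 η (r 0) := by
  have h1 : ∑ k ∈ Finset.range K, c k
      ≤ ∑ k ∈ Finset.range K, (KL2 η (r k) - KL2 η (r (k + 1))) :=
    Finset.sum_le_sum fun k _ => hc k
  rw [Finset.sum_range_sub' (fun k => KL2 η (r k)) K] at h1
  have h2 : 0 ≤ KL2 η (r K) := KL2_nonneg hη1 hη2 (hrint K).1 (hrint K).2
  linarith

theorem exists_nash_kl_tendsto_zero (hμ : 0 < μ)
    (hrint : ∀ k, isInterior (r k).1 ∧ isInterior (r k).2)
    (hstep : ∀ k, isStationary u μ (r k) (r (k + 1)))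
    (hex : ∃ η, isNash u η) :
    ∃ ρ, isNash u ρ ∧ Tendsto (fun k => KL2 ρ (r k)) atTop (nhds 0) := by
  classical
  obtain ⟨η0, hη0⟩ := hex
  obtain ⟨xh, yh, vs, hxs, hys, hrowle, hcolge, hstrict1, hstrict2⟩ :=
    exists_strict_comp u hη0
  obtain a! := Classical.arbitrary A1
  obtain b! := Classical.arbitrary A2
  set B := KL2 (xh, yh) (r 0) with hB
  -- the gain sequence of the strictly complementary pair
  set Gh : ℕ → ℝ := fun k => v1 u xh (r (k + 1)).2 - v1 u (r (k + 1)).1 yh with hGh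
  have hGdec : ∀ k, Gh k
      = (∑ b, (r (k + 1)).2 b * ((∑ a, xh a * u a b) - vs))
        + (∑ a, (r (k + 1)).1 a * (vs - q1 u yh a)) := by
    intro k
    exact G_decomp (η := (xh, yh)) (hrint (k+1)).1.2 (hrint (k+1)).2.2 vs
  have hGnn : ∀ k, 0 ≤ Gh k := by
    intro k
    rw [hGdec k]
    have h1 : 0 ≤ ∑ b, (r (k + 1)).2 b * ((∑ a, xh a * u a b) - vs) :=
      Finset.sum_nonneg fun b _ =>
        mul_nonneg (le_of_lt ((hrint (k+1)).2.1 b)) (by linarith [hcolge b])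
    have h2 : 0 ≤ ∑ a, (r (k + 1)).1 a * (vs - q1 u yh a) :=
      Finset.sum_nonneg fun a _ =>
        mul_nonneg (le_of_lt ((hrint (k+1)).1.1 a)) (by linarith [hrowle a])
    linarith
  -- master drop inequality for arbitrary simplex pair η
  have hdrop : ∀ (η : (A1 → ℝ) × (A2 → ℝ)), isSimplex η.1 → isSimplex η.2 →
      ∀ k (a₀ : A1) (b₀ : A2),
      η.1 a₀ * klf ((r k).1 a₀ / (r (k+1)).1 a₀)
        + η.2 b₀ * klf ((r k).2 b₀ / (r (k+1)).2 b₀)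
        + (v1 u η.1 (r (k+1)).2 - v1 u (r (k+1)).1 η.2) / μ
      ≤ KL2 η (r k) - KL2 η (r (k+1)) := by
    intro η hη1 hη2 k a₀ b₀
    exact drop_ge (hstep k) hμ (hrint k).1 (hrint k).2 (hrint (k+1)).1 (hrint (k+1)).2
      hη1 hη2 a₀ b₀
  have hklfpos : ∀ k (a : A1), 0 < (r k).1 a / (r (k+1)).1 a :=
    fun k a => div_pos ((hrint k).1.1 a) ((hrint (k+1)).1.1 a)
  have hklfpos2 : ∀ k (b : A2), 0 < (r k).2 b / (r (k+1)).2 b :=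
    fun k b => div_pos ((hrint k).2.1 b) ((hrint (k+1)).2.1 b)
  -- hat-pair drop: G/μ ≤ diff and per-coordinate klf bounds
  have hdrophat : ∀ k (a₀ : A1) (b₀ : A2),
      xh a₀ * klf ((r k).1 a₀ / (r (k+1)).1 a₀)
        + yh b₀ * klf ((r k).2 b₀ / (r (k+1)).2 b₀) + Gh k / μ
      ≤ KL2 (xh, yh) (r k) - KL2 (xh, yh) (r (k+1)) := by
    intro k a₀ b₀
    exact hdrop (xh, yh) hxs hys k a₀ b₀
  have hdiffnn : ∀ k, 0 ≤ KL2 (xh, yh) (r k) - KL2 (xh, yh) (r (k+1)) := by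
    intro k
    have h := hdrophat k a! b!
    have h1 : 0 ≤ xh a! * klf ((r k).1 a! / (r (k+1)).1 a!) :=
      mul_nonneg (hxs.1 a!) (klf_nonneg (hklfpos k a!))
    have h2 : 0 ≤ yh b! * klf ((r k).2 b! / (r (k+1)).2 b!) :=
      mul_nonneg (hys.1 b!) (klf_nonneg (hklfpos2 k b!))
    have h3 : 0 ≤ Gh k / μ := div_nonneg (hGnn k) (le_of_lt hμ)
    linarith
  have hKLle : ∀ k, KL2 (xh, yh) (r k) ≤ B := by
    intro k
    induction k with
    | zero => exact le_of_eq hB.symm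
    | succ n ihn => have := hdiffnn n; linarith
  -- uniform coordinate lower bounds on the supports
  have hδ1 : ∀ a, 0 < xh a → ∀ k,
      xh a * Real.exp (-((B + 1) / xh a)) ≤ (r k).1 a := by
    intro a ha k
    refine coord_lb hxs (hrint k).1.1 (hrint k).1.2 ?_ ha
    have h2 : 0 ≤ KL yh (r k).2 := KL_nonneg hys (hrint k).2.1 (hrint k).2.2
    have := hKLle k
    unfold KL2 at this
    linarith
  have hδ2 : ∀ b, 0 < yh b → ∀ k,
      yh b * Real.exp (-((B + 1) / yh b)) ≤ (r k).2 b := by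
    intro b hb k
    refine coord_lb hys (hrint k).2.1 (hrint k).2.2 ?_ hb
    have h2 : 0 ≤ KL xh (r k).1 := KL_nonneg hxs (hrint k).1.1 (hrint k).1.2
    have := hKLle k
    unfold KL2 at this
    linarith
  -- summability of klf terms on supports, hence ratio → 1
  have hrat1 : ∀ a, 0 < xh a →
      Tendsto (fun k => (r k).1 a / (r (k+1)).1 a) atTop (nhds 1) := by
    intro a ha
    have hane := ne_of_gt ha
    have hbound : ∀ K, ∑ k ∈ Finset.range K,
        xh a * klf ((r k).1 a / (r (k+1)).1 a) ≤ B := by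
      intro K
      refine sum_le_KL2_init hμ hrint hxs hys ?_ K
      intro k
      have h := hdrophat k a b!
      have h2 : 0 ≤ yh b! * klf ((r k).2 b! / (r (k+1)).2 b!) :=
        mul_nonneg (hys.1 b!) (klf_nonneg (hklfpos2 k b!))
      have h3 : 0 ≤ Gh k / μ := div_nonneg (hGnn k) (le_of_lt hμ)
      linarith
    have hs0 : Summable (fun k => xh a * klf ((r k).1 a / (r (k+1)).1 a)) :=
      summable_of_sum_range_le
        (fun k => mul_nonneg (hxs.1 a) (klf_nonneg (hklfpos k a))) hbound
    have hs1 := hs0.div_const (xh a)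
    have hs2 : Summable (fun k => klf ((r k).1 a / (r (k+1)).1 a)) := by
      refine hs1.congr fun k => ?_
      field_simp
    exact tendsto_one_of_klf (fun k => hklfpos k a) hs2.tendsto_atTop_zero
  have hrat2 : ∀ b, 0 < yh b →
      Tendsto (fun k => (r k).2 b / (r (k+1)).2 b) atTop (nhds 1) := by
    intro b hb
    have hbne := ne_of_gt hb
    have hbound : ∀ K, ∑ k ∈ Finset.range K,
        yh b * klf ((r k).2 b / (r (k+1)).2 b) ≤ B := by
      intro K
      refine sum_le_KL2_init hμ hrint hxs hys ?_ K
      intro k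
      have h := hdrophat k a! b
      have h2 : 0 ≤ xh a! * klf ((r k).1 a! / (r (k+1)).1 a!) :=
        mul_nonneg (hxs.1 a!) (klf_nonneg (hklfpos k a!))
      have h3 : 0 ≤ Gh k / μ := div_nonneg (hGnn k) (le_of_lt hμ)
      linarith
    have hs0 : Summable (fun k => yh b * klf ((r k).2 b / (r (k+1)).2 b)) :=
      summable_of_sum_range_le
        (fun k => mul_nonneg (hys.1 b) (klf_nonneg (hklfpos2 k b))) hbound
    have hs1 := hs0.div_const (yh b)
    have hs2 : Summable (fun k => klf ((r k).2 b / (r (k+1)).2 b)) := by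
      refine hs1.congr fun k => ?_
      field_simp
    exact tendsto_one_of_klf (fun k => hklfpos2 k b) hs2.tendsto_atTop_zero
  -- partial sums of Gh are bounded
  have hGsum : ∀ K, ∑ k ∈ Finset.range K, Gh k ≤ μ * B := by
    intro K
    have hb : ∀ k, Gh k / μ ≤ KL2 (xh, yh) (r k) - KL2 (xh, yh) (r (k+1)) := by
      intro k
      have h := hdrophat k a! b!
      have h1 : 0 ≤ xh a! * klf ((r k).1 a! / (r (k+1)).1 a!) :=
        mul_nonneg (hxs.1 a!) (klf_nonneg (hklfpos k a!))
      have h2 : 0 ≤ yh b! * klf ((r k).2 b! / (r (k+1)).2 b!) :=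
        mul_nonneg (hys.1 b!) (klf_nonneg (hklfpos2 k b!))
      linarith
    have h := sum_le_KL2_init hμ hrint hxs hys hb K
    rw [← Finset.sum_div, div_le_iff₀ hμ] at h
    rw [mul_comm]
    exact h
  have hGsummable : Summable Gh :=
    summable_of_sum_range_le hGnn hGsum
  have hGto0 : Tendsto Gh atTop (nhds 0) := hGsummable.tendsto_atTop_zero
  -- off-support coordinates are summable and tend to zero
  have hoff1 : ∀ a, ¬ (0 < xh a) → Summable (fun k => (r (k+1)).1 a) := by
    intro a ha
    have hgap : 0 < vs - q1 u yh a := by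
      rcases hstrict1 a with h | h
      · exact absurd h ha
      · linarith
    have hterm : ∀ k, (r (k+1)).1 a * (vs - q1 u yh a) ≤ Gh k := by
      intro k
      rw [hGdec k]
      have hA : 0 ≤ ∑ b, (r (k + 1)).2 b * ((∑ a, xh a * u a b) - vs) :=
        Finset.sum_nonneg fun b _ =>
          mul_nonneg (le_of_lt ((hrint (k+1)).2.1 b)) (by linarith [hcolge b])
      have hB2 : (r (k+1)).1 a * (vs - q1 u yh a)
          ≤ ∑ a', (r (k + 1)).1 a' * (vs - q1 u yh a') :=
        Finset.single_le_sum (f := fun a' => (r (k+1)).1 a' * (vs - q1 u yh a'))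
          (fun a' _ =>
            mul_nonneg (le_of_lt ((hrint (k+1)).1.1 a')) (by linarith [hrowle a']))
          (Finset.mem_univ a)
      linarith
    have hbd : ∀ K, ∑ k ∈ Finset.range K, (r (k+1)).1 a * (vs - q1 u yh a) ≤ μ * B :=
      fun K => le_trans (Finset.sum_le_sum fun k _ => hterm k) (hGsum K)
    have hs0 : Summable (fun k => (r (k+1)).1 a * (vs - q1 u yh a)) :=
      summable_of_sum_range_le (fun k =>
        mul_nonneg (le_of_lt ((hrint (k+1)).1.1 a)) (le_of_lt hgap)) hbd
    have hs1 := hs0.div_const (vs - q1 u yh a)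
    refine hs1.congr fun k => ?_
    field_simp
  have hoff2 : ∀ b, ¬ (0 < yh b) → Summable (fun k => (r (k+1)).2 b) := by
    intro b hb
    have hgap : 0 < (∑ a, xh a * u a b) - vs := by
      rcases hstrict2 b with h | h
      · exact absurd h hb
      · linarith
    have hterm : ∀ k, (r (k+1)).2 b * ((∑ a, xh a * u a b) - vs) ≤ Gh k := by
      intro k
      rw [hGdec k]
      have hA : 0 ≤ ∑ a, (r (k + 1)).1 a * (vs - q1 u yh a) :=
        Finset.sum_nonneg fun a _ =>
          mul_nonneg (le_of_lt ((hrint (k+1)).1.1 a)) (by linarith [hrowle a])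
      have hB2 : (r (k+1)).2 b * ((∑ a, xh a * u a b) - vs)
          ≤ ∑ b', (r (k + 1)).2 b' * ((∑ a, xh a * u a b') - vs) :=
        Finset.single_le_sum (f := fun b' => (r (k+1)).2 b' * ((∑ a, xh a * u a b') - vs))
          (fun b' _ =>
            mul_nonneg (le_of_lt ((hrint (k+1)).2.1 b')) (by linarith [hcolge b']))
          (Finset.mem_univ b)
      linarith
    have hbd : ∀ K, ∑ k ∈ Finset.range K, (r (k+1)).2 b * ((∑ a, xh a * u a b) - vs) ≤ μ * B :=
      fun K => le_trans (Finset.sum_le_sum fun k _ => hterm k) (hGsum K)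
    have hs0 : Summable (fun k => (r (k+1)).2 b * ((∑ a, xh a * u a b) - vs)) :=
      summable_of_sum_range_le (fun k =>
        mul_nonneg (le_of_lt ((hrint (k+1)).2.1 b)) (le_of_lt hgap)) hbd
    have hs1 := hs0.div_const ((∑ a, xh a * u a b) - vs)
    refine hs1.congr fun k => ?_
    field_simp
  have htend01 : ∀ a, ¬ (0 < xh a) → Tendsto (fun k => (r k).1 a) atTop (nhds 0) := by
    intro a ha
    have h := (hoff1 a ha).tendsto_atTop_zero
    exact (tendsto_add_atTop_iff_nat 1).1 h
  have htend02 : ∀ b, ¬ (0 < yh b) → Tendsto (fun k => (r k).2 b) atTop (nhds 0) := by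
    intro b hb
    have h := (hoff2 b hb).tendsto_atTop_zero
    exact (tendsto_add_atTop_iff_nat 1).1 h
  -- Bolzano–Weierstrass
  obtain ⟨ρ, hρmem, φ, hφ, hφt⟩ : ∃ ρ ∈ (Set.univ.pi fun _ : A1 => Set.Icc (0:ℝ) 1) ×ˢ
      (Set.univ.pi fun _ : A2 => Set.Icc (0:ℝ) 1), ∃ φ : ℕ → ℕ, StrictMono φ ∧
      Tendsto (r ∘ φ) atTop (nhds ρ) := by
    refine IsCompact.tendsto_subseq ?_ ?_
    · exact (isCompact_univ_pi fun _ => isCompact_Icc).prod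
        (isCompact_univ_pi fun _ => isCompact_Icc)
    · intro k
      constructor
      · intro a _
        exact ⟨le_of_lt ((hrint k).1.1 a), isSimplex_le_one (interior_toSimplex (hrint k).1) a⟩
      · intro b _
        exact ⟨le_of_lt ((hrint k).2.1 b), isSimplex_le_one (interior_toSimplex (hrint k).2) b⟩
  have h1 : ∀ a, Tendsto (fun j => (r (φ j)).1 a) atTop (nhds (ρ.1 a)) := by
    intro a
    exact (((continuous_apply a).comp continuous_fst).tendsto ρ).comp hφt
  have h2 : ∀ b, Tendsto (fun j => (r (φ j)).2 b) atTop (nhds (ρ.2 b)) := by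
    intro b
    exact (((continuous_apply b).comp continuous_snd).tendsto ρ).comp hφt
  -- ρ is a pair of simplices
  have hρ1 : isSimplex ρ.1 := by
    constructor
    · intro a
      exact le_of_tendsto_of_tendsto' tendsto_const_nhds (h1 a)
        (fun j => le_of_lt ((hrint (φ j)).1.1 a))
    · have hsums : Tendsto (fun j => ∑ a, (r (φ j)).1 a) atTop (nhds (∑ a, ρ.1 a)) :=
        tendsto_finset_sum _ fun a _ => h1 a
      have hconst : (fun j => ∑ a, (r (φ j)).1 a) = fun _ => (1:ℝ) :=
        funext fun j => (hrint (φ j)).1.2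
      rw [hconst] at hsums
      exact (tendsto_nhds_unique hsums tendsto_const_nhds)
  have hρ2 : isSimplex ρ.2 := by
    constructor
    · intro b
      exact le_of_tendsto_of_tendsto' tendsto_const_nhds (h2 b)
        (fun j => le_of_lt ((hrint (φ j)).2.1 b))
    · have hsums : Tendsto (fun j => ∑ b, (r (φ j)).2 b) atTop (nhds (∑ b, ρ.2 b)) :=
        tendsto_finset_sum _ fun b _ => h2 b
      have hconst : (fun j => ∑ b, (r (φ j)).2 b) = fun _ => (1:ℝ) :=
        funext fun j => (hrint (φ j)).2.2
      rw [hconst] at hsums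
      exact (tendsto_nhds_unique hsums tendsto_const_nhds)
  -- support structure of ρ
  have hρoff1 : ∀ a, ¬ (0 < xh a) → ρ.1 a = 0 := by
    intro a ha
    exact tendsto_nhds_unique (h1 a)
      ((htend01 a ha).comp hφ.tendsto_atTop)
  have hρoff2 : ∀ b, ¬ (0 < yh b) → ρ.2 b = 0 := by
    intro b hb
    exact tendsto_nhds_unique (h2 b)
      ((htend02 b hb).comp hφ.tendsto_atTop)
  have hρpos1 : ∀ a, 0 < xh a → 0 < ρ.1 a := by
    intro a ha
    have hlb : xh a * Real.exp (-((B + 1) / xh a)) ≤ ρ.1 a :=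
      le_of_tendsto_of_tendsto' tendsto_const_nhds (h1 a) (fun j => hδ1 a ha (φ j))
    have : 0 < xh a * Real.exp (-((B + 1) / xh a)) :=
      mul_pos ha (Real.exp_pos _)
    linarith
  have hρpos2 : ∀ b, 0 < yh b → 0 < ρ.2 b := by
    intro b hb
    have hlb : yh b * Real.exp (-((B + 1) / yh b)) ≤ ρ.2 b :=
      le_of_tendsto_of_tendsto' tendsto_const_nhds (h2 b) (fun j => hδ2 b hb (φ j))
    have : 0 < yh b * Real.exp (-((B + 1) / yh b)) :=
      mul_pos hb (Real.exp_pos _)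
    linarith
  -- shifted subsequence also converges to ρ
  have hs1 : ∀ a, Tendsto (fun j => (r (φ j + 1)).1 a) atTop (nhds (ρ.1 a)) := by
    intro a
    by_cases ha : 0 < xh a
    · have hdiv : Tendsto (fun j => (r (φ j)).1 a / ((r (φ j)).1 a / (r (φ j + 1)).1 a))
          atTop (nhds (ρ.1 a / 1)) :=
        (h1 a).div ((hrat1 a ha).comp hφ.tendsto_atTop) one_ne_zero
      rw [div_one] at hdiv
      refine hdiv.congr fun j => ?_
      have hn1 : (r (φ j)).1 a ≠ 0 := ne_of_gt ((hrint (φ j)).1.1 a)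
      have hn2 : (r (φ j + 1)).1 a ≠ 0 := ne_of_gt ((hrint (φ j + 1)).1.1 a)
      field_simp
    · rw [hρoff1 a ha]
      exact ((hoff1 a ha).tendsto_atTop_zero).comp hφ.tendsto_atTop
  have hs2 : ∀ b, Tendsto (fun j => (r (φ j + 1)).2 b) atTop (nhds (ρ.2 b)) := by
    intro b
    by_cases hb : 0 < yh b
    · have hdiv : Tendsto (fun j => (r (φ j)).2 b / ((r (φ j)).2 b / (r (φ j + 1)).2 b))
          atTop (nhds (ρ.2 b / 1)) :=
        (h2 b).div ((hrat2 b hb).comp hφ.tendsto_atTop) one_ne_zero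
      rw [div_one] at hdiv
      refine hdiv.congr fun j => ?_
      have hn1 : (r (φ j)).2 b ≠ 0 := ne_of_gt ((hrint (φ j)).2.1 b)
      have hn2 : (r (φ j + 1)).2 b ≠ 0 := ne_of_gt ((hrint (φ j + 1)).2.1 b)
      field_simp
    · rw [hρoff2 b hb]
      exact ((hoff2 b hb).tendsto_atTop_zero).comp hφ.tendsto_atTop
  -- limit equalization on supports
  have heq1 : ∀ a, 0 < xh a → q1 u ρ.2 a = v1 u ρ.1 ρ.2 := by
    intro a ha
    have hadv : Tendsto (fun k => μ * (1 - (r k).1 a / (r (k+1)).1 a)) atTop (nhds 0) := by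
      have h0 : Tendsto (fun k => (1:ℝ) - (r k).1 a / (r (k+1)).1 a) atTop
          (nhds (1 - 1)) := tendsto_const_nhds.sub (hrat1 a ha)
      have h0' := h0.const_mul μ
      norm_num at h0'
      exact h0'
    have he : ∀ k, q1 u (r (k+1)).2 a - v1 u (r (k+1)).1 (r (k+1)).2
        = μ * (1 - (r k).1 a / (r (k+1)).1 a) := fun k =>
      adv_div1 (hstep k) hμ ((hrint (k+1)).1.1 a)
    have hlim2 : Tendsto
        (fun j => q1 u (r (φ j + 1)).2 a - v1 u (r (φ j + 1)).1 (r (φ j + 1)).2)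
        atTop (nhds (q1 u ρ.2 a - v1 u ρ.1 ρ.2)) :=
      (tendsto_q1 hs2 a).sub (tendsto_v1 hs1 hs2)
    have hlim1 : Tendsto
        (fun j => q1 u (r (φ j + 1)).2 a - v1 u (r (φ j + 1)).1 (r (φ j + 1)).2)
        atTop (nhds 0) := by
      have h0 := hadv.comp hφ.tendsto_atTop
      exact Tendsto.congr (fun j => (he (φ j)).symm) h0
    have := tendsto_nhds_unique hlim2 hlim1
    linarith
  have heq2 : ∀ b, 0 < yh b → q2 u ρ.1 b = - v1 u ρ.1 ρ.2 := by
    intro b hb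
    have hadv : Tendsto (fun k => μ * (1 - (r k).2 b / (r (k+1)).2 b)) atTop (nhds 0) := by
      have h0 : Tendsto (fun k => (1:ℝ) - (r k).2 b / (r (k+1)).2 b) atTop
          (nhds (1 - 1)) := tendsto_const_nhds.sub (hrat2 b hb)
      have h0' := h0.const_mul μ
      norm_num at h0'
      exact h0'
    have he : ∀ k, q2 u (r (k+1)).1 b + v1 u (r (k+1)).1 (r (k+1)).2
        = μ * (1 - (r k).2 b / (r (k+1)).2 b) := fun k =>
      adv_div2 (hstep k) hμ ((hrint (k+1)).2.1 b)
    have hlim2 : Tendsto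
        (fun j => q2 u (r (φ j + 1)).1 b + v1 u (r (φ j + 1)).1 (r (φ j + 1)).2)
        atTop (nhds (q2 u ρ.1 b + v1 u ρ.1 ρ.2)) :=
      (tendsto_q2 hs1 b).add (tendsto_v1 hs1 hs2)
    have hlim1 : Tendsto
        (fun j => q2 u (r (φ j + 1)).1 b + v1 u (r (φ j + 1)).1 (r (φ j + 1)).2)
        atTop (nhds 0) := by
      have h0 := hadv.comp hφ.tendsto_atTop
      exact Tendsto.congr (fun j => (he (φ j)).symm) h0
    have := tendsto_nhds_unique hlim2 hlim1
    linarith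
  -- the limit value is vs
  have hslack0 : (∑ b, ρ.2 b * ((∑ a, xh a * u a b) - vs))
      + (∑ a, ρ.1 a * (vs - q1 u yh a)) = 0 := by
    have hlim : Tendsto (fun j => Gh (φ j)) atTop
        (nhds ((∑ b, ρ.2 b * ((∑ a, xh a * u a b) - vs))
          + (∑ a, ρ.1 a * (vs - q1 u yh a)))) := by
      have hcong : ∀ j, Gh (φ j)
          = (∑ b, (r (φ j + 1)).2 b * ((∑ a, xh a * u a b) - vs))
            + (∑ a, (r (φ j + 1)).1 a * (vs - q1 u yh a)) := fun j => hGdec (φ j)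
      refine Tendsto.congr (fun j => (hcong j).symm) ?_
      exact (tendsto_finset_sum _ fun b _ => (hs2 b).mul_const _).add
        (tendsto_finset_sum _ fun a _ => (hs1 a).mul_const _)
    exact (tendsto_nhds_unique hlim (hGto0.comp hφ.tendsto_atTop))
  have hvρ : v1 u ρ.1 ρ.2 = vs := by
    have e1 : v1 u xh ρ.2 = v1 u ρ.1 ρ.2 := by
      rw [v1_sum_q1]
      have hc : ∀ a, xh a * q1 u ρ.2 a = xh a * v1 u ρ.1 ρ.2 := by
        intro a
        rcases eq_or_lt_of_le (hxs.1 a) with h | h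
        · rw [← h]; ring
        · rw [heq1 a h]
      rw [Finset.sum_congr rfl fun a _ => hc a, ← Finset.sum_mul, hxs.2, one_mul]
    have e2 : v1 u xh ρ.2 = vs + ∑ b, ρ.2 b * ((∑ a, xh a * u a b) - vs) := by
      rw [v1_cols]
      have hc : ∀ b, ρ.2 b * (∑ a, xh a * u a b)
          = ρ.2 b * vs + ρ.2 b * ((∑ a, xh a * u a b) - vs) := fun b => by ring
      rw [Finset.sum_congr rfl fun b _ => hc b, Finset.sum_add_distrib,
        ← Finset.sum_mul, hρ2.2, one_mul]
    have hs1nn : 0 ≤ ∑ b, ρ.2 b * ((∑ a, xh a * u a b) - vs) :=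
      Finset.sum_nonneg fun b _ => mul_nonneg (hρ2.1 b) (by linarith [hcolge b])
    have hs2nn : 0 ≤ ∑ a, ρ.1 a * (vs - q1 u yh a) :=
      Finset.sum_nonneg fun a _ => mul_nonneg (hρ1.1 a) (by linarith [hrowle a])
    have h0 : ∑ b, ρ.2 b * ((∑ a, xh a * u a b) - vs) = 0 := by linarith
    rw [← e1, e2, h0, add_zero]
  -- quasi-Fejér property of KL2 ρ (r ·)
  obtain ⟨L, hL⟩ : ∃ L, Tendsto (fun k => KL2 ρ (r k)) atTop (nhds L) := by
    set M : ℝ := ∑ a, ∑ b, |u a b| with hM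
    have hM0 : 0 ≤ M := Finset.sum_nonneg fun a _ => Finset.sum_nonneg fun b _ => abs_nonneg _
    set CU : ℝ := M + |vs| + 1 with hCU
    have hCU0 : 0 < CU := by
      have := abs_nonneg vs
      rw [hCU]
      linarith
    set moff : ℕ → ℝ := fun k =>
      (∑ a, if 0 < xh a then 0 else (r (k+1)).1 a)
      + (∑ b, if 0 < yh b then 0 else (r (k+1)).2 b) with hmoff
    have hmoffnn : ∀ k, 0 ≤ moff k := by
      intro k
      refine add_nonneg (Finset.sum_nonneg fun a _ => ?_) (Finset.sum_nonneg fun b _ => ?_)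
      · by_cases h : 0 < xh a
        · simp [h]
        · simp only [if_neg h]
          exact le_of_lt ((hrint (k+1)).1.1 a)
      · by_cases h : 0 < yh b
        · simp [h]
        · simp only [if_neg h]
          exact le_of_lt ((hrint (k+1)).2.1 b)
    have hmoffsum : Summable moff := by
      refine Summable.add ?_ ?_
      · refine summable_sum fun a _ => ?_
        by_cases h : 0 < xh a
        · simp only [if_pos h]
          exact summable_zero
        · simp only [if_neg h]
          exact hoff1 a h
      · refine summable_sum fun b _ => ?_
        by_cases h : 0 < yh b
        · simp only [if_pos h]
          exact summable_zero
        · simp only [if_neg h]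
          exact hoff2 b h
    have hCb : ∀ b, |(∑ a, ρ.1 a * u a b) - vs| ≤ CU := by
      intro b
      have h1 : |∑ a, ρ.1 a * u a b| ≤ ∑ a, |u a b| := by
        calc |∑ a, ρ.1 a * u a b| ≤ ∑ a, |ρ.1 a * u a b| :=
              Finset.abs_sum_le_sum_abs _ _
        _ ≤ ∑ a, |u a b| := by
              refine Finset.sum_le_sum fun a _ => ?_
              rw [abs_mul, abs_of_nonneg (hρ1.1 a)]
              exact mul_le_of_le_one_left (abs_nonneg _) (isSimplex_le_one hρ1 a)
      have h2 : ∑ a, |u a b| ≤ M := by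
        rw [hM]
        refine Finset.sum_le_sum fun a _ => ?_
        exact Finset.single_le_sum (f := fun b' => |u a b'|)
          (fun b' _ => abs_nonneg _) (Finset.mem_univ b)
      have h3 := abs_add_le (∑ a, ρ.1 a * u a b) (-vs)
      rw [abs_neg, ← sub_eq_add_neg] at h3
      rw [hCU]
      linarith
    have hRa : ∀ a, |vs - q1 u ρ.2 a| ≤ CU := by
      intro a
      have h1 : |q1 u ρ.2 a| ≤ ∑ b, |u a b| := by
        unfold q1
        calc |∑ b, ρ.2 b * u a b| ≤ ∑ b, |ρ.2 b * u a b| :=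
              Finset.abs_sum_le_sum_abs _ _
        _ ≤ ∑ b, |u a b| := by
              refine Finset.sum_le_sum fun b _ => ?_
              rw [abs_mul, abs_of_nonneg (hρ2.1 b)]
              exact mul_le_of_le_one_left (abs_nonneg _) (isSimplex_le_one hρ2 b)
      have h2 : ∑ b, |u a b| ≤ M := by
        rw [hM]
        exact Finset.single_le_sum (f := fun a' => ∑ b, |u a' b|)
          (fun a' _ => Finset.sum_nonneg fun b _ => abs_nonneg _) (Finset.mem_univ a)
      have h3 := abs_add_le vs (- q1 u ρ.2 a)
      rw [abs_neg, ← sub_eq_add_neg] at h3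
      rw [hCU]
      linarith
    have hGρ : ∀ k, -(CU * moff k) ≤ v1 u ρ.1 (r (k+1)).2 - v1 u (r (k+1)).1 ρ.2 := by
      intro k
      rw [G_decomp (η := ρ) (hrint (k+1)).1.2 (hrint (k+1)).2.2 vs]
      have hb : ∀ b, (if 0 < yh b then 0 else (r (k+1)).2 b) * (-CU)
          ≤ (r (k+1)).2 b * ((∑ a, ρ.1 a * u a b) - vs) := by
        intro b
        by_cases hyb : 0 < yh b
        · rw [if_pos hyb]
          have hq2 : q2 u ρ.1 b = - ∑ a, ρ.1 a * u a b := by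
            unfold q2
            rw [← Finset.sum_neg_distrib]
            exact Finset.sum_congr rfl fun a _ => by ring
          have hz : (∑ a, ρ.1 a * u a b) - vs = 0 := by
            have h' := heq2 b hyb
            rw [hq2, hvρ] at h'
            linarith
          rw [hz, mul_zero, zero_mul]
        · rw [if_neg hyb]
          have hlow : -CU ≤ (∑ a, ρ.1 a * u a b) - vs := (abs_le.1 (hCb b)).1
          exact mul_le_mul_of_nonneg_left hlow (le_of_lt ((hrint (k+1)).2.1 b))
      have ha' : ∀ a, (if 0 < xh a then 0 else (r (k+1)).1 a) * (-CU)
          ≤ (r (k+1)).1 a * (vs - q1 u ρ.2 a) := by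
        intro a
        by_cases hxa : 0 < xh a
        · rw [if_pos hxa]
          have hz : vs - q1 u ρ.2 a = 0 := by
            rw [heq1 a hxa, hvρ]
            ring
          rw [hz, mul_zero, zero_mul]
        · rw [if_neg hxa]
          have hlow : -CU ≤ vs - q1 u ρ.2 a := (abs_le.1 (hRa a)).1
          exact mul_le_mul_of_nonneg_left hlow (le_of_lt ((hrint (k+1)).1.1 a))
      have hsb := Finset.sum_le_sum (fun b (_ : b ∈ Finset.univ) => hb b)
      have hsa := Finset.sum_le_sum (fun a (_ : a ∈ Finset.univ) => ha' a)
      rw [← Finset.sum_mul] at hsb hsa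
      have he : -(CU * moff k)
          = (∑ b, if 0 < yh b then 0 else (r (k+1)).2 b) * (-CU)
            + (∑ a, if 0 < xh a then 0 else (r (k+1)).1 a) * (-CU) := by
        rw [hmoff]
        ring
      rw [he]
      linarith
    refine quasi_fejer (a := fun k => KL2 ρ (r k)) (c := fun k => (CU / μ) * moff k)
      (fun k => KL2_nonneg hρ1 hρ2 (hrint k).1 (hrint k).2)
      (fun k => mul_nonneg (div_nonneg (le_of_lt hCU0) (le_of_lt hμ)) (hmoffnn k))
      ?_ (hmoffsum.mul_left _)
    intro k
    have hd := hdrop ρ hρ1 hρ2 k a! b!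
    have h1' : 0 ≤ ρ.1 a! * klf ((r k).1 a! / (r (k+1)).1 a!) :=
      mul_nonneg (hρ1.1 a!) (klf_nonneg (hklfpos k a!))
    have h2' : 0 ≤ ρ.2 b! * klf ((r k).2 b! / (r (k+1)).2 b!) :=
      mul_nonneg (hρ2.1 b!) (klf_nonneg (hklfpos2 k b!))
    have h3' := hGρ k
    have h4' : (-(CU * moff k)) / μ
        ≤ (v1 u ρ.1 (r (k+1)).2 - v1 u (r (k+1)).1 ρ.2) / μ := by
      rw [div_le_div_iff₀ hμ hμ]
      nlinarith [mul_le_mul_of_nonneg_right h3' (le_of_lt hμ)]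
    have h5' : -((CU / μ) * moff k) = (-(CU * moff k)) / μ := by ring
    have h6' : -((CU / μ) * moff k) ≤ KL2 ρ (r k) - KL2 ρ (r (k+1)) := by
      rw [h5']
      linarith
    linarith
  -- the subsequence tends to 0, so L = 0
  have hsub0 : Tendsto (fun j => KL2 ρ (r (φ j))) atTop (nhds 0) := by
    have hterm1 : ∀ a, Tendsto (fun j => ρ.1 a * Real.log (ρ.1 a / (r (φ j)).1 a))
        atTop (nhds 0) := by
      intro a
      rcases eq_or_lt_of_le (hρ1.1 a) with h | h
      · have he : (fun j => ρ.1 a * Real.log (ρ.1 a / (r (φ j)).1 a)) = fun _ => 0 := by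
          funext j
          rw [← h]
          ring
        rw [he]
        exact tendsto_const_nhds
      · have hdiv : Tendsto (fun j => ρ.1 a / (r (φ j)).1 a) atTop (nhds 1) := by
          have hd := (tendsto_const_nhds (x := ρ.1 a)).div (h1 a) (ne_of_gt h)
          rwa [div_self (ne_of_gt h)] at hd
        have hlog : Tendsto (fun j => Real.log (ρ.1 a / (r (φ j)).1 a)) atTop (nhds 0) := by
          have hc := (Real.continuousAt_log one_ne_zero).tendsto
          rw [Real.log_one] at hc
          exact hc.comp hdiv
        have hm := hlog.const_mul (ρ.1 a)
        rw [mul_zero] at hm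
        exact hm
    have hterm2 : ∀ b, Tendsto (fun j => ρ.2 b * Real.log (ρ.2 b / (r (φ j)).2 b))
        atTop (nhds 0) := by
      intro b
      rcases eq_or_lt_of_le (hρ2.1 b) with h | h
      · have he : (fun j => ρ.2 b * Real.log (ρ.2 b / (r (φ j)).2 b)) = fun _ => 0 := by
          funext j
          rw [← h]
          ring
        rw [he]
        exact tendsto_const_nhds
      · have hdiv : Tendsto (fun j => ρ.2 b / (r (φ j)).2 b) atTop (nhds 1) := by
          have hd := (tendsto_const_nhds (x := ρ.2 b)).div (h2 b) (ne_of_gt h)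
          rwa [div_self (ne_of_gt h)] at hd
        have hlog : Tendsto (fun j => Real.log (ρ.2 b / (r (φ j)).2 b)) atTop (nhds 0) := by
          have hc := (Real.continuousAt_log one_ne_zero).tendsto
          rw [Real.log_one] at hc
          exact hc.comp hdiv
        have hm := hlog.const_mul (ρ.2 b)
        rw [mul_zero] at hm
        exact hm
    have hsum1 : Tendsto (fun j => ∑ a, ρ.1 a * Real.log (ρ.1 a / (r (φ j)).1 a))
        atTop (nhds 0) := by
      have := tendsto_finset_sum Finset.univ fun a (_ : a ∈ Finset.univ) => hterm1 a
      rwa [Finset.sum_const_zero] at this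
    have hsum2 : Tendsto (fun j => ∑ b, ρ.2 b * Real.log (ρ.2 b / (r (φ j)).2 b))
        atTop (nhds 0) := by
      have := tendsto_finset_sum Finset.univ fun b (_ : b ∈ Finset.univ) => hterm2 b
      rwa [Finset.sum_const_zero] at this
    have := hsum1.add hsum2
    rw [add_zero] at this
    exact this
  have hL0 : L = 0 :=
    tendsto_nhds_unique (hL.comp hφ.tendsto_atTop) hsub0
  rw [hL0] at hL
  -- full coordinatewise convergence r k → ρ
  have hconv1 : ∀ a, Tendsto (fun k => (r k).1 a) atTop (nhds (ρ.1 a)) := by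
    intro a
    rcases eq_or_lt_of_le (hρ1.1 a) with h0 | hpos
    · have hoff : ¬ (0 < xh a) := by
        intro hc
        have := hρpos1 a hc
        rw [← h0] at this
        exact lt_irrefl _ this
      rw [← h0]
      exact htend01 a hoff
    · have htf : ∀ k, 0 ≤ ρ.1 a * Real.log (ρ.1 a / (r k).1 a) - ρ.1 a + (r k).1 a :=
        fun k => termf_nonneg (hρ1.1 a) ((hrint k).1.1 a)
      have hub : ∀ k, ρ.1 a * Real.log (ρ.1 a / (r k).1 a) - ρ.1 a + (r k).1 a
          ≤ KL2 ρ (r k) := by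
        intro k
        have e := KL_eq_termf (p := ρ.1) (q := (r k).1) hρ1.2 (hrint k).1.2
        have hsingle : ρ.1 a * Real.log (ρ.1 a / (r k).1 a) - ρ.1 a + (r k).1 a
            ≤ ∑ a', (ρ.1 a' * Real.log (ρ.1 a' / (r k).1 a') - ρ.1 a' + (r k).1 a') :=
          Finset.single_le_sum (f := fun a' =>
            ρ.1 a' * Real.log (ρ.1 a' / (r k).1 a') - ρ.1 a' + (r k).1 a')
            (fun a' _ => termf_nonneg (hρ1.1 a') ((hrint k).1.1 a')) (Finset.mem_univ a)
        have h2'' : 0 ≤ KL ρ.2 (r k).2 := KL_nonneg hρ2 (hrint k).2.1 (hrint k).2.2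
        unfold KL2
        rw [← e] at hsingle
        linarith
      have hsq : Tendsto (fun k => ρ.1 a * Real.log (ρ.1 a / (r k).1 a) - ρ.1 a + (r k).1 a)
          atTop (nhds 0) :=
        tendsto_of_tendsto_of_tendsto_of_le_of_le tendsto_const_nhds hL htf hub
      have heqf : ∀ k, ρ.1 a * Real.log (ρ.1 a / (r k).1 a) - ρ.1 a + (r k).1 a
          = ρ.1 a * klf ((r k).1 a / ρ.1 a) :=
        fun k => termf_eq_klf hpos ((hrint k).1.1 a)
      have hklf : Tendsto (fun k => klf ((r k).1 a / ρ.1 a)) atTop (nhds 0) := by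
        have h' := Tendsto.congr heqf hsq
        have h'' := h'.div_const (ρ.1 a)
        rw [zero_div] at h''
        refine h''.congr fun k => ?_
        field_simp
      have hratio := tendsto_one_of_klf
        (fun k => div_pos ((hrint k).1.1 a) hpos) hklf
      have hm := hratio.mul_const (ρ.1 a)
      rw [one_mul] at hm
      refine hm.congr fun k => ?_
      field_simp
  have hconv2 : ∀ b, Tendsto (fun k => (r k).2 b) atTop (nhds (ρ.2 b)) := by
    intro b
    rcases eq_or_lt_of_le (hρ2.1 b) with h0 | hpos
    · have hoff : ¬ (0 < yh b) := by
        intro hc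
        have := hρpos2 b hc
        rw [← h0] at this
        exact lt_irrefl _ this
      rw [← h0]
      exact htend02 b hoff
    · have hub : ∀ k, ρ.2 b * Real.log (ρ.2 b / (r k).2 b) - ρ.2 b + (r k).2 b
          ≤ KL2 ρ (r k) := by
        intro k
        have e := KL_eq_termf (p := ρ.2) (q := (r k).2) hρ2.2 (hrint k).2.2
        have hsingle : ρ.2 b * Real.log (ρ.2 b / (r k).2 b) - ρ.2 b + (r k).2 b
            ≤ ∑ b', (ρ.2 b' * Real.log (ρ.2 b' / (r k).2 b') - ρ.2 b' + (r k).2 b') :=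
          Finset.single_le_sum (f := fun b' =>
            ρ.2 b' * Real.log (ρ.2 b' / (r k).2 b') - ρ.2 b' + (r k).2 b')
            (fun b' _ => termf_nonneg (hρ2.1 b') ((hrint k).2.1 b')) (Finset.mem_univ b)
        have h2'' : 0 ≤ KL ρ.1 (r k).1 := KL_nonneg hρ1 (hrint k).1.1 (hrint k).1.2
        unfold KL2
        rw [← e] at hsingle
        linarith
      have htf : ∀ k, 0 ≤ ρ.2 b * Real.log (ρ.2 b / (r k).2 b) - ρ.2 b + (r k).2 b :=
        fun k => termf_nonneg (hρ2.1 b) ((hrint k).2.1 b)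
      have hsq : Tendsto (fun k => ρ.2 b * Real.log (ρ.2 b / (r k).2 b) - ρ.2 b + (r k).2 b)
          atTop (nhds 0) :=
        tendsto_of_tendsto_of_tendsto_of_le_of_le tendsto_const_nhds hL htf hub
      have heqf : ∀ k, ρ.2 b * Real.log (ρ.2 b / (r k).2 b) - ρ.2 b + (r k).2 b
          = ρ.2 b * klf ((r k).2 b / ρ.2 b) :=
        fun k => termf_eq_klf hpos ((hrint k).2.1 b)
      have hklf : Tendsto (fun k => klf ((r k).2 b / ρ.2 b)) atTop (nhds 0) := by
        have h' := Tendsto.congr heqf hsq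
        have h'' := h'.div_const (ρ.2 b)
        rw [zero_div] at h''
        refine h''.congr fun k => ?_
        field_simp
      have hratio := tendsto_one_of_klf
        (fun k => div_pos ((hrint k).2.1 b) hpos) hklf
      have hm := hratio.mul_const (ρ.2 b)
      rw [one_mul] at hm
      refine hm.congr fun k => ?_
      field_simp
  have hconv1' : ∀ a, Tendsto (fun k => (r (k+1)).1 a) atTop (nhds (ρ.1 a)) :=
    fun a => (hconv1 a).comp (tendsto_add_atTop_nat 1)
  have hconv2' : ∀ b, Tendsto (fun k => (r (k+1)).2 b) atTop (nhds (ρ.2 b)) :=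
    fun b => (hconv2 b).comp (tendsto_add_atTop_nat 1)
  -- no action has a limiting advantage (growth argument)
  have hrowρ : ∀ a, q1 u ρ.2 a ≤ vs := by
    intro a
    by_contra hgt
    push_neg at hgt
    have hκ0 : 0 < q1 u ρ.2 a - vs := by linarith
    set κ := q1 u ρ.2 a - vs with hκ
    have hadvt : Tendsto (fun k => q1 u (r (k+1)).2 a - v1 u (r (k+1)).1 (r (k+1)).2)
        atTop (nhds κ) := by
      have h := (tendsto_q1 (u := u) hconv2' a).sub (tendsto_v1 (u := u) hconv1' hconv2')
      rw [hvρ] at h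
      exact h
    have hev : ∀ᶠ k in atTop,
        κ/2 ≤ q1 u (r (k+1)).2 a - v1 u (r (k+1)).1 (r (k+1)).2 :=
      hadvt.eventually (eventually_ge_nhds (by linarith))
    obtain ⟨K, hK⟩ := Filter.eventually_atTop.1 hev
    have hden : 0 < μ - κ/2 := by
      have h := stat_ratio1 (hstep K) (a := a)
      have hpos1 : 0 < μ * (r K).1 a := mul_pos hμ ((hrint K).1.1 a)
      have hpos2 : 0 < (r (K+1)).1 a := (hrint (K+1)).1.1 a
      have hadv := hK K le_rfl
      nlinarith
    set lam := μ / (μ - κ/2) with hlam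
    have hlam1 : 1 < lam := by
      rw [hlam, lt_div_iff₀ hden]
      linarith
    have hgrow : ∀ k, K ≤ k → lam * (r k).1 a ≤ (r (k+1)).1 a := by
      intro k hk
      have h := stat_ratio1 (hstep k) (a := a)
      have hadv := hK k hk
      have hp1 : 0 < (r (k+1)).1 a := (hrint (k+1)).1.1 a
      rw [hlam, div_mul_eq_mul_div, div_le_iff₀ hden]
      nlinarith
    have hpow : ∀ n, lam ^ n * (r K).1 a ≤ (r (K + n)).1 a := by
      intro n
      induction n with
      | zero => simp
      | succ m ih =>
        have hg := hgrow (K + m) (Nat.le_add_right K m)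
        have h2 : lam ^ (m+1) * (r K).1 a = lam * (lam ^ m * (r K).1 a) := by ring
        have h3 : lam * (lam ^ m * (r K).1 a) ≤ lam * (r (K + m)).1 a :=
          mul_le_mul_of_nonneg_left ih (by linarith)
        have h4 : K + (m + 1) = (K + m) + 1 := by omega
        rw [h4, h2]
        exact le_trans h3 hg
    obtain ⟨n, hn⟩ := pow_unbounded_of_one_lt (((r K).1 a)⁻¹) hlam1
    have hKa : 0 < (r K).1 a := (hrint K).1.1 a
    have h1b : (r (K+n)).1 a ≤ 1 :=
      isSimplex_le_one (interior_toSimplex (hrint (K+n)).1) a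
    have hbig : 1 < lam ^ n * (r K).1 a := by
      have h5 := mul_lt_mul_of_pos_right hn hKa
      rw [inv_mul_cancel₀ (ne_of_gt hKa)] at h5
      exact h5
    linarith [hpow n]
  have hcolρ : ∀ b, vs ≤ ∑ a, ρ.1 a * u a b := by
    intro b
    by_contra hgt
    push_neg at hgt
    have hq2e : q2 u ρ.1 b = - ∑ a, ρ.1 a * u a b := by
      unfold q2
      rw [← Finset.sum_neg_distrib]
      exact Finset.sum_congr rfl fun a _ => by ring
    have hκ0 : 0 < q2 u ρ.1 b + vs := by rw [hq2e]; linarith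
    set κ := q2 u ρ.1 b + vs with hκ
    have hadvt : Tendsto (fun k => q2 u (r (k+1)).1 b + v1 u (r (k+1)).1 (r (k+1)).2)
        atTop (nhds κ) := by
      have h := (tendsto_q2 (u := u) hconv1' b).add (tendsto_v1 (u := u) hconv1' hconv2')
      rw [hvρ] at h
      exact h
    have hev : ∀ᶠ k in atTop,
        κ/2 ≤ q2 u (r (k+1)).1 b + v1 u (r (k+1)).1 (r (k+1)).2 :=
      hadvt.eventually (eventually_ge_nhds (by linarith))
    obtain ⟨K, hK⟩ := Filter.eventually_atTop.1 hev
    have hden : 0 < μ - κ/2 := by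
      have h := stat_ratio2 (hstep K) (b := b)
      have hpos1 : 0 < μ * (r K).2 b := mul_pos hμ ((hrint K).2.1 b)
      have hpos2 : 0 < (r (K+1)).2 b := (hrint (K+1)).2.1 b
      have hadv := hK K le_rfl
      nlinarith
    set lam := μ / (μ - κ/2) with hlam
    have hlam1 : 1 < lam := by
      rw [hlam, lt_div_iff₀ hden]
      linarith
    have hgrow : ∀ k, K ≤ k → lam * (r k).2 b ≤ (r (k+1)).2 b := by
      intro k hk
      have h := stat_ratio2 (hstep k) (b := b)
      have hadv := hK k hk
      have hp1 : 0 < (r (k+1)).2 b := (hrint (k+1)).2.1 b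
      rw [hlam, div_mul_eq_mul_div, div_le_iff₀ hden]
      nlinarith
    have hpow : ∀ n, lam ^ n * (r K).2 b ≤ (r (K + n)).2 b := by
      intro n
      induction n with
      | zero => simp
      | succ m ih =>
        have hg := hgrow (K + m) (Nat.le_add_right K m)
        have h2 : lam ^ (m+1) * (r K).2 b = lam * (lam ^ m * (r K).2 b) := by ring
        have h3 : lam * (lam ^ m * (r K).2 b) ≤ lam * (r (K + m)).2 b :=
          mul_le_mul_of_nonneg_left ih (by linarith)
        have h4 : K + (m + 1) = (K + m) + 1 := by omega
        rw [h4, h2]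
        exact le_trans h3 hg
    obtain ⟨n, hn⟩ := pow_unbounded_of_one_lt (((r K).2 b)⁻¹) hlam1
    have hKb : 0 < (r K).2 b := (hrint K).2.1 b
    have h1b : (r (K+n)).2 b ≤ 1 :=
      isSimplex_le_one (interior_toSimplex (hrint (K+n)).2) b
    have hbig : 1 < lam ^ n * (r K).2 b := by
      have h5 := mul_lt_mul_of_pos_right hn hKb
      rw [inv_mul_cancel₀ (ne_of_gt hKb)] at h5
      exact h5
    linarith [hpow n]
  -- ρ is a Nash equilibrium
  have hρNash : isNash u ρ := by
    have hvv : v1 u ρ.1 ρ.2 = vs := hvρ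
    refine ⟨hρ1, hρ2, ?_, ?_⟩
    · intro y hy
      rw [hvv, v1_cols]
      calc vs = ∑ b, y b * vs := by rw [← Finset.sum_mul, hy.2, one_mul]
      _ ≤ ∑ b, y b * ∑ a, ρ.1 a * u a b :=
        Finset.sum_le_sum fun b _ => mul_le_mul_of_nonneg_left (hcolρ b) (hy.1 b)
    · intro x hx
      rw [hvv, v1_sum_q1]
      calc ∑ a, x a * q1 u ρ.2 a ≤ ∑ a, x a * vs :=
            Finset.sum_le_sum fun a _ => mul_le_mul_of_nonneg_left (hrowρ a) (hx.1 a)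
      _ = vs := by rw [← Finset.sum_mul, hx.2, one_mul]
  exact ⟨ρ, hρNash, hL⟩

end M2WU

open Filter in
/-- **Theorem 3 (convergence of the adapted reference strategies to the Nash set).** -/
theorem reference_iterates_converge_to_nash {A1 A2 : Type*}
    [Fintype A1] [Fintype A2] [Nonempty A1] [Nonempty A2]
    (u : A1 → A2 → ℝ)
    (μ : ℝ) (hμ : 0 < μ ∧ μ ≤ 1)
    (r : ℕ → (A1 → ℝ) × (A2 → ℝ))
    (hrint : ∀ k, isInterior (r k).1 ∧ isInterior (r k).2)
    (hstep : ∀ k, isStationary u μ (r k) (r (k + 1))) :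
    Tendsto (fun k => sInf ((fun σ => KL2 σ (r k)) '' {σ | isNash u σ}))
      atTop (nhds 0) := by
  classical
  by_cases hex : ∃ η, isNash u η
  · obtain ⟨ρ, hρ, htend⟩ := M2WU.exists_nash_kl_tendsto_zero hμ.1 hrint hstep hex
    have hbdd : ∀ k, ∀ x ∈ (fun σ => KL2 σ (r k)) '' {σ | isNash u σ}, (0:ℝ) ≤ x := by
      intro k x hx
      obtain ⟨σp, hσp, rfl⟩ := hx
      exact M2WU.KL2_nonneg hσp.1 hσp.2.1 (hrint k).1 (hrint k).2
    have h0 : ∀ k, 0 ≤ sInf ((fun σ => KL2 σ (r k)) '' {σ | isNash u σ}) :=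
      fun k => Real.sInf_nonneg (hbdd k)
    have hub : ∀ k, sInf ((fun σ => KL2 σ (r k)) '' {σ | isNash u σ}) ≤ KL2 ρ (r k) := by
      intro k
      refine csInf_le ⟨0, fun x hx => hbdd k x hx⟩ ?_
      exact ⟨ρ, hρ, rfl⟩
    exact tendsto_of_tendsto_of_tendsto_of_le_of_le tendsto_const_nhds htend h0 hub
  · have hemp : ∀ k, (fun σ => KL2 σ (r k)) '' {σ | isNash u σ} = ∅ := by
      intro k
      rw [Set.image_eq_empty]
      exact Set.eq_empty_iff_forall_notMem.2 fun σp hσ => hex ⟨σp, hσ⟩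
    simp only [hemp, Real.sInf_empty]
    exact tendsto_const_nhds
end
end
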